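/- arXiv:1901.10427 — 5 statements merged into one kernel-verified Lean document; each statement's English description precedes it below -/
import Mathlib

section
/- Let N ≥ 3 and 2* = 2N/(N−2). There exists a constant C > 0, depending only on N, such that for every u ∈ C_c^∞(ℝ^N) one has ∫_{ℝ^N} |u|^{2*} dx ≤ C · (∫_{ℝ^N} (|∇u|² + u²) dx) · ( sup_{m ∈ ℤ} ∫_{{x ∈ ℝ^N : 2^{m(N−2)/2} ≤ |u(x)| ≤ 2^{(m+1)(N−2)/2}}} |u|^{2*} dx )^{2/N}. -/
open MeasureTheory Filter Topology
open scoped RealInnerProductSpace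
open scoped NNReal ENNReal

noncomputable section

namespace SSaux


/-- smooth cutoff -/
def cutoff (α β t : ℝ) : ℝ := β * Real.smoothTransition ((|t| - α) / (β - α))

variable {α β : ℝ}

lemma cutoff_of_le (hβ : α < β) {t : ℝ} (ht : |t| ≤ α) : cutoff α β t = 0 := by
  rw [cutoff, Real.smoothTransition.zero_of_nonpos, mul_zero]
  exact div_nonpos_of_nonpos_of_nonneg (by linarith) (by linarith)

lemma cutoff_of_ge (hβ : α < β) {t : ℝ} (ht : β ≤ |t|) : cutoff α β t = β := by
  rw [cutoff, Real.smoothTransition.one_of_one_le, mul_one]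
  rw [le_div_iff₀ (by linarith)]
  linarith

lemma cutoff_zero (hα : 0 ≤ α) (hβ : α < β) : cutoff α β 0 = 0 :=
  cutoff_of_le hβ (by simpa using hα)

lemma cutoff_lipschitz {L : ℝ≥0} (hL : LipschitzWith L Real.smoothTransition)
    (hβ0 : 0 < β) (hβ : α < β) :
    LipschitzWith (Real.toNNReal (β * L / (β - α))) (cutoff α β) := by
  apply LipschitzWith.of_dist_le_mul
  intro t s
  have hβα : (0:ℝ) < β - α := by linarith
  have h1 : dist (cutoff α β t) (cutoff α β s) =
      β * dist (Real.smoothTransition ((|t| - α) / (β - α)))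
        (Real.smoothTransition ((|s| - α) / (β - α))) := by
    rw [cutoff, cutoff, Real.dist_eq, Real.dist_eq, ← mul_sub, abs_mul, abs_of_pos hβ0]
  rw [h1]
  have h2 := hL.dist_le_mul ((|t| - α) / (β - α)) ((|s| - α) / (β - α))
  have h3 : dist ((|t| - α) / (β - α)) ((|s| - α) / (β - α)) ≤ dist t s / (β - α) := by
    rw [Real.dist_eq, div_sub_div_same, abs_div, abs_of_pos hβα]
    gcongr
    rw [sub_sub_sub_cancel_right]
    calc |(|t| - |s|)| ≤ |t - s| := abs_abs_sub_abs_le_abs_sub t s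
      _ = dist t s := (Real.dist_eq t s).symm
  have hc : ((Real.toNNReal (β * L / (β - α)) : ℝ≥0) : ℝ) = β * L / (β - α) :=
    Real.coe_toNNReal _ (by positivity)
  rw [hc]
  have hd : dist (Real.smoothTransition ((|t| - α) / (β - α)))
      (Real.smoothTransition ((|s| - α) / (β - α))) ≤ L * (dist t s / (β - α)) :=
    h2.trans (by gcongr)
  calc β * dist (Real.smoothTransition ((|t| - α) / (β - α)))
        (Real.smoothTransition ((|s| - α) / (β - α)))
      ≤ β * (L * (dist t s / (β - α))) := by gcongr
    _ = β * L / (β - α) * dist t s := by ring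

lemma cutoff_contDiff (hα : 0 < α) (hβ : α < β) : ContDiff ℝ 1 (cutoff α β) := by
  rw [contDiff_iff_contDiffAt]
  intro s
  rcases lt_trichotomy (|s|) α with h | h | h
  · -- locally constant 0
    have hev : cutoff α β =ᶠ[nhds s] (fun _ => (0:ℝ)) := by
      have : ∀ᶠ t in nhds s, |t| < α := by
        have : ContinuousAt (fun t : ℝ => |t|) s := continuous_abs.continuousAt
        exact this.eventually_lt continuousAt_const h
      filter_upwards [this] with t ht
      exact cutoff_of_le hβ ht.le
    exact (contDiffAt_const (c := (0:ℝ))).congr_of_eventuallyEq hev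
  all_goals {
    have hs0 : s ≠ 0 := by
      intro h0; rw [h0, abs_zero] at h; first | exact hα.ne h | exact (hα.trans h).ne' rfl
    rcases hs0.lt_or_gt with hneg | hpos
    · -- s < 0 : near s, |t| = -t
      have hsm : ContDiffAt ℝ 1 (fun t : ℝ => β * Real.smoothTransition ((-t - α) / (β - α))) s := by
        apply ContDiffAt.mul contDiffAt_const
        apply (Real.smoothTransition.contDiff (n := 1)).contDiffAt.comp
        exact ((contDiffAt_id.neg).sub contDiffAt_const).div_const _
      apply hsm.congr_of_eventuallyEq
      have : ∀ᶠ t in nhds s, t < 0 := Filter.tendsto_id.eventually_lt_const hneg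
      filter_upwards [this] with t ht
      rw [cutoff, abs_of_neg ht]
    · have hsm : ContDiffAt ℝ 1 (fun t : ℝ => β * Real.smoothTransition ((t - α) / (β - α))) s := by
        apply ContDiffAt.mul contDiffAt_const
        apply (Real.smoothTransition.contDiff (n := 1)).contDiffAt.comp
        exact (contDiffAt_id.sub contDiffAt_const).div_const _
      apply hsm.congr_of_eventuallyEq
      have : ∀ᶠ t in nhds s, 0 < t := Filter.tendsto_id.eventually_const_lt hpos
      filter_upwards [this] with t ht
      rw [cutoff, abs_of_pos ht]
  }

lemma cutoff_fderiv_zero_of_lt (hβ : α < β) {s : ℝ} (h : |s| < α) :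
    fderiv ℝ (cutoff α β) s = 0 := by
  have hev : cutoff α β =ᶠ[nhds s] (fun _ => (0:ℝ)) := by
    have : ∀ᶠ t in nhds s, |t| < α :=
      (continuous_abs.continuousAt).eventually_lt continuousAt_const h
    filter_upwards [this] with t ht
    exact cutoff_of_le hβ ht.le
  rw [hev.fderiv_eq, fderiv_fun_const]
  rfl

lemma cutoff_fderiv_zero_of_gt (hβ : α < β) {s : ℝ} (h : β < |s|) :
    fderiv ℝ (cutoff α β) s = 0 := by
  have hev : cutoff α β =ᶠ[nhds s] (fun _ => β) := by
    have : ∀ᶠ t in nhds s, β < |t| :=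
      continuousAt_const.eventually_lt (continuous_abs.continuousAt) h
    filter_upwards [this] with t ht
    exact cutoff_of_ge hβ ht.le
  rw [hev.fderiv_eq, fderiv_fun_const]
  rfl

/-- Lipschitz constant for smoothTransition -/
lemma exists_lipschitz_smoothTransition : ∃ L : ℝ≥0, LipschitzWith L Real.smoothTransition := by
  have hcd : ContDiff ℝ 1 Real.smoothTransition := Real.smoothTransition.contDiff (n := 1)
  have hdiff : Differentiable ℝ Real.smoothTransition := hcd.differentiable one_ne_zero
  have hfc : Continuous (fderiv ℝ Real.smoothTransition) := hcd.continuous_fderiv one_ne_zero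
  have hsupp : HasCompactSupport (fderiv ℝ Real.smoothTransition) := by
    apply HasCompactSupport.intro (isCompact_Icc (a := (0:ℝ)) (b := 1))
    intro x hx
    simp only [Set.mem_Icc, not_and_or, not_le] at hx
    rcases hx with hx | hx
    · have hev : Real.smoothTransition =ᶠ[nhds x] (fun _ => (0:ℝ)) := by
        have : ∀ᶠ t in nhds x, t < 0 := Filter.tendsto_id.eventually_lt_const hx
        filter_upwards [this] with t ht
        exact Real.smoothTransition.zero_of_nonpos ht.le
      simp [hev.fderiv_eq]
    · have hev : Real.smoothTransition =ᶠ[nhds x] (fun _ => (1:ℝ)) := by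
        have : ∀ᶠ t in nhds x, 1 < t := Filter.tendsto_id.eventually_const_lt hx
        filter_upwards [this] with t ht
        exact Real.smoothTransition.one_of_one_le ht.le
      simp [hev.fderiv_eq]
  obtain ⟨C, hC⟩ := hsupp.exists_bound_of_continuous hfc
  refine ⟨Real.toNNReal C, lipschitzWith_of_nnnorm_fderiv_le hdiff fun x => ?_⟩
  have := hC x
  rw [← NNReal.coe_le_coe]
  simp only [coe_nnnorm]
  exact this.trans (Real.le_coe_toNNReal C)


lemma key (N : ℕ) (hN : 3 ≤ N) :
    ∃ C₀ : ℝ≥0∞, C₀ ≠ ⊤ ∧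
      ∀ (u : EuclideanSpace ℝ (Fin N) → ℝ), ContDiff ℝ 1 u → HasCompactSupport u →
      ∀ α : ℝ, 0 < α →
      (∫⁻ x in {x | (2:ℝ)^(((N:ℝ)-2)/2) * α ≤ |u x| ∧
          |u x| ≤ (2:ℝ)^(((N:ℝ)-2)/2) * ((2:ℝ)^(((N:ℝ)-2)/2) * α)},
        ENNReal.ofReal (|u x| ^ ((2*(N:ℝ))/((N:ℝ)-2)))) ≤
      C₀ * (∫⁻ x in {x | α ≤ |u x| ∧ |u x| ≤ (2:ℝ)^(((N:ℝ)-2)/2) * α},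
        ((‖fderiv ℝ u x‖₊ : ℝ≥0∞)^(2:ℝ))) ^ ((N:ℝ)/((N:ℝ)-2)) := by
  obtain ⟨L, hL⟩ := exists_lipschitz_smoothTransition
  have hn3 : (3:ℝ) ≤ (N:ℝ) := by exact_mod_cast hN
  set n : ℝ := (N:ℝ) with hn
  have hn2 : 0 < n - 2 := by linarith
  set b : ℝ := (2:ℝ)^((n-2)/2) with hbdef
  have hb1 : 1 < b := Real.one_lt_rpow_iff_of_pos two_pos |>.2 (Or.inl ⟨one_lt_two, by positivity⟩)
  have hb0 : 0 < b := lt_trans one_pos hb1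
  set p : ℝ := (2*n)/(n-2) with hpdef
  have hp0 : 0 < p := by positivity
  have hp2 : 2 ≤ p := by rw [hpdef, le_div_iff₀ hn2]; linarith
  set K : ℝ≥0 := Real.toNNReal (b * L / (b - 1)) with hKdef
  set S : ℝ≥0 := SNormLESNormFDerivOfEqConst ℝ (volume : Measure (EuclideanSpace ℝ (Fin N))) ((2:ℝ≥0):ℝ) with hSdef
  refine ⟨ENNReal.ofReal (b^p) * (S:ℝ≥0∞)^p * ((K:ℝ≥0∞)^(2:ℝ))^(p/2), ?_, ?_⟩
  · have h1 : (S:ℝ≥0∞)^p ≠ ⊤ := ENNReal.rpow_ne_top_of_nonneg hp0.le ENNReal.coe_ne_top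
    have h2 : ((K:ℝ≥0∞)^(2:ℝ))^(p/2) ≠ ⊤ := by
      apply ENNReal.rpow_ne_top_of_nonneg (by positivity)
      exact ENNReal.rpow_ne_top_of_nonneg (by norm_num) ENNReal.coe_ne_top
    exact ENNReal.mul_ne_top (ENNReal.mul_ne_top ENNReal.ofReal_ne_top h1) h2
  intro u hu1 h2u α hα
  set β : ℝ := b * α with hβdef
  have hαβ : α < β := by rw [hβdef]; nlinarith
  have hβ0 : 0 < β := lt_trans hα hαβ
  set ψ : ℝ → ℝ := cutoff α β with hψdef
  set v : EuclideanSpace ℝ (Fin N) → ℝ := ψ ∘ u with hvdef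
  have hψcd : ContDiff ℝ 1 ψ := cutoff_contDiff hα hαβ
  have hv : ContDiff ℝ 1 v := hψcd.comp hu1
  have h2v : HasCompactSupport v := h2u.comp_left (cutoff_zero hα.le hαβ)
  have hψlip : LipschitzWith K ψ := by
    have := cutoff_lipschitz hL hβ0 hαβ
    have heq : β * L / (β - α) = b * L / (b - 1) := by
      have hαne : α ≠ 0 := hα.ne'
      have hb1ne : b - 1 ≠ 0 := sub_ne_zero_of_ne hb1.ne'
      rw [hβdef]
      rw [show b * α - α = (b - 1) * α by ring]
      field_simp
    rwa [heq] at this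
  have hψK : ∀ s, ‖fderiv ℝ ψ s‖ ≤ K := fun s =>
    ((hψcd.differentiable one_ne_zero s).hasFDerivAt).le_of_lipschitz hψlip
  have hch : ∀ x, fderiv ℝ v x = (fderiv ℝ ψ (u x)).comp (fderiv ℝ u x) := fun x =>
    fderiv_comp x (hψcd.differentiable one_ne_zero _) (hu1.differentiable one_ne_zero _)
  -- measurable sets
  have hucont : Continuous u := hu1.continuous
  have hTmeas : MeasurableSet {x : EuclideanSpace ℝ (Fin N) | β ≤ |u x| ∧ |u x| ≤ b * β} :=
    (measurableSet_le measurable_const hucont.abs.measurable).inter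
      (measurableSet_le hucont.abs.measurable measurable_const)
  have hBmeas : MeasurableSet {x : EuclideanSpace ℝ (Fin N) | α ≤ |u x| ∧ |u x| ≤ β} :=
    (measurableSet_le measurable_const hucont.abs.measurable).inter
      (measurableSet_le hucont.abs.measurable measurable_const)
  -- Sobolev
  set p' : ℝ≥0 := Real.toNNReal p with hp'def
  have hp'coe : (p' : ℝ) = p := Real.coe_toNNReal p hp0.le
  have hrank : 0 < Module.finrank ℝ (EuclideanSpace ℝ (Fin N)) := by
    rw [finrank_euclideanSpace_fin]; omega
  have hp'inv : ((p':ℝ))⁻¹ = (((2:ℝ≥0)):ℝ)⁻¹ - ((Module.finrank ℝ (EuclideanSpace ℝ (Fin N)) : ℝ))⁻¹ := by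
    rw [hp'coe, finrank_euclideanSpace_fin, hpdef]
    rw [NNReal.coe_ofNat]
    field_simp
    rw [hn]; ring
  have hSob : eLpNorm v p' volume ≤
      (S : ℝ≥0∞) * eLpNorm (fderiv ℝ v) ((2:ℝ≥0) : ℝ≥0∞) volume :=
    eLpNorm_le_eLpNorm_fderiv_of_eq volume hv h2v one_le_two hrank hp'inv
  -- step A : pointwise bound on T
  have stepA : (∫⁻ x in {x : EuclideanSpace ℝ (Fin N) | β ≤ |u x| ∧ |u x| ≤ b * β},
      ENNReal.ofReal (|u x| ^ p)) ≤
      ENNReal.ofReal (b^p) * ∫⁻ x, ((‖v x‖₊ : ℝ≥0∞)^p) := by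
    have hpt : ∀ x ∈ {x : EuclideanSpace ℝ (Fin N) | β ≤ |u x| ∧ |u x| ≤ b * β},
        ENNReal.ofReal (|u x| ^ p) ≤ ENNReal.ofReal (b^p) * ((‖v x‖₊ : ℝ≥0∞)^p) := by
      rintro x ⟨h1, h2⟩
      have hvx : v x = β := cutoff_of_ge hαβ h1
      have hle : |u x| ^ p ≤ b^p * β^p := by
        rw [← Real.mul_rpow hb0.le hβ0.le]
        exact Real.rpow_le_rpow (abs_nonneg _) h2 hp0.le
      calc ENNReal.ofReal (|u x| ^ p) ≤ ENNReal.ofReal (b^p * β^p) := ENNReal.ofReal_le_ofReal hle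
        _ = ENNReal.ofReal (b^p) * ENNReal.ofReal (β^p) := ENNReal.ofReal_mul (by positivity)
        _ = ENNReal.ofReal (b^p) * ((‖v x‖₊ : ℝ≥0∞)^p) := by
            rw [hvx, ← ENNReal.ofReal_coe_nnreal, coe_nnnorm, Real.norm_of_nonneg hβ0.le,
              ENNReal.ofReal_rpow_of_nonneg hβ0.le hp0.le]
    calc (∫⁻ x in {x : EuclideanSpace ℝ (Fin N) | β ≤ |u x| ∧ |u x| ≤ b * β},
        ENNReal.ofReal (|u x| ^ p))
        ≤ ∫⁻ x in {x : EuclideanSpace ℝ (Fin N) | β ≤ |u x| ∧ |u x| ≤ b * β},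
          ENNReal.ofReal (b^p) * ((‖v x‖₊ : ℝ≥0∞)^p) := setLIntegral_mono' hTmeas hpt
      _ = ENNReal.ofReal (b^p) * ∫⁻ x in {x : EuclideanSpace ℝ (Fin N) | β ≤ |u x| ∧ |u x| ≤ b * β},
          ((‖v x‖₊ : ℝ≥0∞)^p) := lintegral_const_mul' _ _ ENNReal.ofReal_ne_top
      _ ≤ ENNReal.ofReal (b^p) * ∫⁻ x, ((‖v x‖₊ : ℝ≥0∞)^p) := by
          gcongr
          exact Measure.restrict_le_self
  -- step B
  have hp'ne0 : (p' : ℝ≥0∞) ≠ 0 := by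
    simp only [ne_eq, ENNReal.coe_eq_zero, hp'def, Real.toNNReal_eq_zero, not_le]
    exact hp0
  have stepB : (∫⁻ x, ((‖v x‖₊ : ℝ≥0∞)^p)) = (eLpNorm v p' volume)^p := by
    rw [eLpNorm_eq_lintegral_rpow_enorm_toReal hp'ne0 ENNReal.coe_ne_top]
    have ht : ((p' : ℝ≥0∞)).toReal = p := by rw [ENNReal.coe_toReal, hp'coe]
    rw [ht, ← ENNReal.rpow_mul, one_div, inv_mul_cancel₀ hp0.ne', ENNReal.rpow_one]
    rfl
  -- step CD
  have stepCD : (eLpNorm v p' volume)^p ≤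
      (S:ℝ≥0∞)^p * ((∫⁻ x, ((‖fderiv ℝ v x‖₊ : ℝ≥0∞)^(2:ℝ)))^(p/2)) := by
    have hE : eLpNorm (fderiv ℝ v) (((2:ℝ≥0)) : ℝ≥0∞) volume =
        (∫⁻ x, ((‖fderiv ℝ v x‖₊ : ℝ≥0∞)^(2:ℝ)))^(1/(2:ℝ)) := by
      rw [eLpNorm_eq_lintegral_rpow_enorm_toReal (by norm_num) (by norm_num)]
      norm_num
      rfl
    calc (eLpNorm v p' volume)^p
        ≤ ((S:ℝ≥0∞) * eLpNorm (fderiv ℝ v) (((2:ℝ≥0)) : ℝ≥0∞) volume)^p :=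
          ENNReal.rpow_le_rpow hSob hp0.le
      _ = (S:ℝ≥0∞)^p * (eLpNorm (fderiv ℝ v) (((2:ℝ≥0)) : ℝ≥0∞) volume)^p :=
          ENNReal.mul_rpow_of_nonneg _ _ hp0.le
      _ = (S:ℝ≥0∞)^p * ((∫⁻ x, ((‖fderiv ℝ v x‖₊ : ℝ≥0∞)^(2:ℝ)))^(p/2)) := by
          rw [hE, ← ENNReal.rpow_mul, show (1/2) * p = p/2 by ring]
  -- step E
  have stepE : (∫⁻ x, ((‖fderiv ℝ v x‖₊ : ℝ≥0∞)^(2:ℝ))) ≤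
      ((K:ℝ≥0∞)^(2:ℝ)) * ∫⁻ x in {x : EuclideanSpace ℝ (Fin N) | α ≤ |u x| ∧ |u x| ≤ β},
        ((‖fderiv ℝ u x‖₊ : ℝ≥0∞)^(2:ℝ)) := by
    have hpt2 : ∀ x, ((‖fderiv ℝ v x‖₊ : ℝ≥0∞)^(2:ℝ)) ≤
        ({x : EuclideanSpace ℝ (Fin N) | α ≤ |u x| ∧ |u x| ≤ β}).indicator
          (fun x => ((K:ℝ≥0∞)^(2:ℝ)) * ((‖fderiv ℝ u x‖₊ : ℝ≥0∞)^(2:ℝ))) x := by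
      intro x
      by_cases hx : x ∈ {x : EuclideanSpace ℝ (Fin N) | α ≤ |u x| ∧ |u x| ≤ β}
      · rw [Set.indicator_of_mem hx]
        have h1 : ‖fderiv ℝ v x‖ ≤ (K:ℝ) * ‖fderiv ℝ u x‖ := by
          rw [hch x]
          exact le_trans (ContinuousLinearMap.opNorm_comp_le _ _)
            (mul_le_mul_of_nonneg_right (hψK _) (norm_nonneg _))
        have h2 : (‖fderiv ℝ v x‖₊ : ℝ≥0∞) ≤ (K:ℝ≥0∞) * (‖fderiv ℝ u x‖₊ : ℝ≥0∞) := by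
          rw [← ENNReal.coe_mul]
          exact ENNReal.coe_le_coe.2 (by exact_mod_cast h1)
        calc ((‖fderiv ℝ v x‖₊ : ℝ≥0∞)^(2:ℝ))
            ≤ ((K:ℝ≥0∞) * (‖fderiv ℝ u x‖₊ : ℝ≥0∞))^(2:ℝ) :=
              ENNReal.rpow_le_rpow h2 (by norm_num)
          _ = ((K:ℝ≥0∞)^(2:ℝ)) * ((‖fderiv ℝ u x‖₊ : ℝ≥0∞)^(2:ℝ)) :=
              ENNReal.mul_rpow_of_nonneg _ _ (by norm_num)
      · rw [Set.indicator_of_notMem hx]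
        have hz : fderiv ℝ v x = 0 := by
          rw [hch x]
          have hz1 : fderiv ℝ ψ (u x) = 0 := by
            rw [Set.mem_setOf_eq] at hx
            rcases not_and_or.1 hx with h | h
            · exact cutoff_fderiv_zero_of_lt hαβ (not_le.mp h)
            · exact cutoff_fderiv_zero_of_gt hαβ (not_le.mp h)
          rw [hz1]
          exact ContinuousLinearMap.zero_comp _
        rw [hz]
        simp [ENNReal.zero_rpow_of_pos two_pos]
    calc (∫⁻ x, ((‖fderiv ℝ v x‖₊ : ℝ≥0∞)^(2:ℝ)))
        ≤ ∫⁻ x, ({x : EuclideanSpace ℝ (Fin N) | α ≤ |u x| ∧ |u x| ≤ β}).indicator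
            (fun x => ((K:ℝ≥0∞)^(2:ℝ)) * ((‖fderiv ℝ u x‖₊ : ℝ≥0∞)^(2:ℝ))) x :=
          lintegral_mono hpt2
      _ = ∫⁻ x in {x : EuclideanSpace ℝ (Fin N) | α ≤ |u x| ∧ |u x| ≤ β},
            ((K:ℝ≥0∞)^(2:ℝ)) * ((‖fderiv ℝ u x‖₊ : ℝ≥0∞)^(2:ℝ)) :=
          lintegral_indicator hBmeas _
      _ = ((K:ℝ≥0∞)^(2:ℝ)) * ∫⁻ x in {x : EuclideanSpace ℝ (Fin N) | α ≤ |u x| ∧ |u x| ≤ β},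
            ((‖fderiv ℝ u x‖₊ : ℝ≥0∞)^(2:ℝ)) :=
          lintegral_const_mul' _ _ (ENNReal.rpow_ne_top_of_nonneg (by norm_num) ENNReal.coe_ne_top)
  -- assemble
  have hpn : p/2 = n/(n-2) := by rw [hpdef]; ring
  calc (∫⁻ x in {x : EuclideanSpace ℝ (Fin N) | β ≤ |u x| ∧ |u x| ≤ b * β},
      ENNReal.ofReal (|u x| ^ p))
      ≤ ENNReal.ofReal (b^p) * ∫⁻ x, ((‖v x‖₊ : ℝ≥0∞)^p) := stepA
    _ = ENNReal.ofReal (b^p) * (eLpNorm v p' volume)^p := by rw [stepB]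
    _ ≤ ENNReal.ofReal (b^p) * ((S:ℝ≥0∞)^p *
        ((∫⁻ x, ((‖fderiv ℝ v x‖₊ : ℝ≥0∞)^(2:ℝ)))^(p/2))) := mul_le_mul_right stepCD _
    _ ≤ ENNReal.ofReal (b^p) * ((S:ℝ≥0∞)^p *
        ((((K:ℝ≥0∞)^(2:ℝ)) * ∫⁻ x in {x : EuclideanSpace ℝ (Fin N) | α ≤ |u x| ∧ |u x| ≤ β},
          ((‖fderiv ℝ u x‖₊ : ℝ≥0∞)^(2:ℝ)))^(p/2))) := by
        gcongr
    _ = ENNReal.ofReal (b^p) * (S:ℝ≥0∞)^p * ((K:ℝ≥0∞)^(2:ℝ))^(p/2) *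
        (∫⁻ x in {x : EuclideanSpace ℝ (Fin N) | α ≤ |u x| ∧ |u x| ≤ β},
          ((‖fderiv ℝ u x‖₊ : ℝ≥0∞)^(2:ℝ)))^(n/(n-2)) := by
        rw [ENNReal.mul_rpow_of_nonneg _ _ (by positivity), hpn]
        ring


end SSaux

/-- dyadic level-set estimate for the critical Sobolev norm on ℝ^N. -/
theorem struwe_solimini_stmt0 (N : ℕ) (hN : 3 ≤ N) :
    ∃ C : ℝ, 0 < C ∧
      ∀ u : EuclideanSpace ℝ (Fin N) → ℝ, ContDiff ℝ (⊤ : ℕ∞) u → HasCompactSupport u →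
        (∫ x, |u x| ^ ((2 * (N : ℝ)) / ((N : ℝ) - 2))) ≤
          C * (∫ x, (‖gradient u x‖ ^ 2 + (u x) ^ 2)) *
            (⨆ m : ℤ, ∫ x in {x : EuclideanSpace ℝ (Fin N) |
                (2 : ℝ) ^ ((m : ℝ) * ((N : ℝ) - 2) / 2) ≤ |u x| ∧
                |u x| ≤ (2 : ℝ) ^ (((m : ℝ) + 1) * ((N : ℝ) - 2) / 2)},
              |u x| ^ ((2 * (N : ℝ)) / ((N : ℝ) - 2))) ^ ((2 : ℝ) / (N : ℝ)) := by
  obtain ⟨C₀, hC₀top, hkey⟩ := SSaux.key N hN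
  have hn3 : (3:ℝ) ≤ (N:ℝ) := by exact_mod_cast hN
  set n : ℝ := (N:ℝ) with hndef
  have hn0 : 0 < n := by linarith
  have hn2 : 0 < n - 2 := by linarith
  set p : ℝ := (2*n)/(n-2) with hpdef
  have hp0 : 0 < p := by positivity
  set b : ℝ := (2:ℝ)^((n-2)/2) with hbdef
  have hb1 : 1 < b := Real.one_lt_rpow_iff_of_pos two_pos |>.2 (Or.inl ⟨one_lt_two, by positivity⟩)
  have hb0 : 0 < b := lt_trans one_pos hb1
  refine ⟨2 * ((C₀ ^ ((n-2)/n)).toReal) + 1, by positivity, ?_⟩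
  intro u hu h2u
  have hu1 : ContDiff ℝ 1 u := hu.of_le (by simp)
  have hucont : Continuous u := hu.continuous
  set a : ℤ → ℝ := fun m => (2:ℝ)^((m:ℝ)*(n-2)/2) with hadef
  have ha_pos : ∀ m, 0 < a m := fun m => Real.rpow_pos_of_pos two_pos _
  have ha_succ : ∀ m : ℤ, a (m+1) = b * a m := by
    intro m
    rw [hadef, hbdef]
    simp only
    rw [← Real.rpow_add two_pos]
    push_cast
    ring_nf
  have ha_mono : ∀ {m m' : ℤ}, m ≤ m' → a m ≤ a m' := by
    intro m m' h
    apply Real.rpow_le_rpow_of_exponent_le one_le_two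
    have : (m:ℝ) ≤ (m':ℝ) := by exact_mod_cast h
    have := sub_nonneg.2 hn3
    nlinarith [hn2]
  set A : ℤ → Set (EuclideanSpace ℝ (Fin N)) := fun m => {x | a m ≤ |u x| ∧ |u x| ≤ b * a m}
    with hAdef
  set Sd : ℤ → Set (EuclideanSpace ℝ (Fin N)) := fun m => {x | a m ≤ |u x| ∧ |u x| < b * a m}
    with hSdef
  have hAmeas : ∀ m, MeasurableSet (A m) := fun m =>
    (measurableSet_le measurable_const hucont.abs.measurable).inter
      (measurableSet_le hucont.abs.measurable measurable_const)
  have hSmeas : ∀ m, MeasurableSet (Sd m) := fun m =>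
    (measurableSet_le measurable_const hucont.abs.measurable).inter
      (measurableSet_lt hucont.abs.measurable measurable_const)
  -- the sets in the statement are the `A m`
  have hset : ∀ m : ℤ, {x : EuclideanSpace ℝ (Fin N) |
      (2 : ℝ) ^ ((m : ℝ) * (n - 2) / 2) ≤ |u x| ∧
      |u x| ≤ (2 : ℝ) ^ (((m : ℝ) + 1) * (n - 2) / 2)} = A m := by
    intro m
    have h2 : (2 : ℝ) ^ (((m : ℝ) + 1) * (n - 2) / 2) = b * a m := by
      rw [hbdef, hadef]
      simp only
      rw [← Real.rpow_add two_pos]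
      ring_nf
    rw [hAdef]
    simp only [h2, hadef]
  -- integrability facts
  have hi1 : Integrable (fun x => |u x| ^ p) volume := by
    have hc : Continuous (fun x => |u x| ^ p) :=
      hucont.abs.rpow_const (fun x => Or.inr hp0.le)
    have hcs : HasCompactSupport (fun x => |u x| ^ p) := by
      have : (fun x => |u x| ^ p) = (fun t : ℝ => |t| ^ p) ∘ u := rfl
      rw [this]
      exact h2u.comp_left (by simp [Real.zero_rpow hp0.ne'])
    exact hc.integrable_of_hasCompactSupport hcs
  have hnonneg : ∀ x, 0 ≤ |u x| ^ p := fun x => Real.rpow_nonneg (abs_nonneg _) _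
  have hfdcont : Continuous (fderiv ℝ u) := hu.continuous_fderiv (by simp)
  have hi2 : Integrable (fun x => ‖fderiv ℝ u x‖ ^ 2) volume := by
    have hc : Continuous (fun x => ‖fderiv ℝ u x‖ ^ 2) := (hfdcont.norm).pow 2
    have hcs : HasCompactSupport (fun x => ‖fderiv ℝ u x‖ ^ 2) := by
      have : (fun x => ‖fderiv ℝ u x‖ ^ 2) =
          (fun T : EuclideanSpace ℝ (Fin N) →L[ℝ] ℝ => ‖T‖ ^ 2) ∘ (fderiv ℝ u) := rfl
      rw [this]
      exact (h2u.fderiv ℝ).comp_left (by simp)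
    exact hc.integrable_of_hasCompactSupport hcs
  have hgradnorm : ∀ x, ‖gradient u x‖ = ‖fderiv ℝ u x‖ := by
    intro x
    rw [gradient]
    exact LinearIsometryEquiv.norm_map _ _
  have hgradcont : Continuous (gradient u) := by
    have : gradient u = fun x => (InnerProductSpace.toDual ℝ _).symm (fderiv ℝ u x) := rfl
    rw [this]
    exact (InnerProductSpace.toDual ℝ _).symm.continuous.comp hfdcont
  have hi3 : Integrable (fun x => ‖gradient u x‖ ^ 2 + (u x) ^ 2) volume := by
    have hc : Continuous (fun x => ‖gradient u x‖ ^ 2 + (u x) ^ 2) :=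
      ((hgradcont.norm).pow 2).add (hucont.pow 2)
    have hcs : HasCompactSupport (fun x => ‖gradient u x‖ ^ 2 + (u x) ^ 2) := by
      apply HasCompactSupport.add
      · have : (fun x => ‖gradient u x‖ ^ 2) =
            (fun w : EuclideanSpace ℝ (Fin N) => ‖w‖ ^ 2) ∘ (gradient u) := rfl
        rw [this]
        apply HasCompactSupport.comp_left ?_ (by simp)
        · have : gradient u = (fun T => (InnerProductSpace.toDual ℝ _).symm T) ∘ (fderiv ℝ u) := rfl
          rw [this]
          exact (h2u.fderiv ℝ).comp_left (by simp)
      · have : (fun x => (u x) ^ 2) = (fun t : ℝ => t ^ 2) ∘ u := rfl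
        rw [this]
        exact h2u.comp_left (by simp)
    exact hc.integrable_of_hasCompactSupport hcs
  -- the supremum
  set d : ℝ := ⨆ m : ℤ, ∫ x in A m, |u x| ^ p with hddef
  have hbdd : BddAbove (Set.range fun m : ℤ => ∫ x in A m, |u x| ^ p) := by
    refine ⟨∫ x, |u x| ^ p, ?_⟩
    rintro _ ⟨m, rfl⟩
    exact setIntegral_le_integral hi1 (ae_of_all _ hnonneg)
  have hd0 : 0 ≤ d := by
    refine le_trans ?_ (le_ciSup hbdd 0)
    exact setIntegral_nonneg (hAmeas 0) (fun x _ => hnonneg x)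
  -- ENNReal-side functions
  set F : EuclideanSpace ℝ (Fin N) → ℝ≥0∞ := fun x => ENNReal.ofReal (|u x| ^ p) with hFdef
  set G : EuclideanSpace ℝ (Fin N) → ℝ≥0∞ := fun x => ((‖fderiv ℝ u x‖₊ : ℝ≥0∞)^(2:ℝ))
    with hGdef
  have hGmeas : Measurable G :=
    ((hfdcont.measurable.nnnorm).coe_nnreal_ennreal).pow_const (2:ℝ)
  have hIle : ∀ m : ℤ, (∫⁻ x in A m, F x) ≤ ENNReal.ofReal d := by
    intro m
    have heq : ENNReal.ofReal (∫ x in A m, |u x| ^ p) = ∫⁻ x in A m, F x :=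
      ofReal_integral_eq_lintegral_ofReal hi1.integrableOn (ae_of_all _ hnonneg)
    rw [← heq]
    exact ENNReal.ofReal_le_ofReal (le_ciSup hbdd m)
  have hIfin : ∀ m : ℤ, (∫⁻ x in A m, F x) ≠ ⊤ := fun m =>
    ((hIle m).trans_lt ENNReal.ofReal_lt_top).ne
  -- the key chain estimate
  have hchain : ∀ m : ℤ, (∫⁻ x in Sd m, F x) ≤
      (ENNReal.ofReal d)^((2:ℝ)/n) * C₀^((n-2)/n) * ∫⁻ x in A (m-1), G x := by
    intro m
    have hsub : (∫⁻ x in Sd m, F x) ≤ ∫⁻ x in A m, F x := by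
      apply lintegral_mono'
      · apply Measure.restrict_mono _ le_rfl
        intro x hx
        exact ⟨hx.1, hx.2.le⟩
      · exact le_rfl
    by_cases h0 : (∫⁻ x in A m, F x) = 0
    · exact le_trans hsub (by rw [h0]; exact zero_le)
    have hkm := hkey u hu1 h2u (a (m-1)) (ha_pos (m-1))
    have h1 : a m = b * a (m-1) := by
      rw [← ha_succ (m-1)]
      congr 1
      ring
    have hTA : {x : EuclideanSpace ℝ (Fin N) | b * a (m-1) ≤ |u x| ∧
        |u x| ≤ b * (b * a (m-1))} = A m := by
      show _ = {x : EuclideanSpace ℝ (Fin N) | a m ≤ |u x| ∧ |u x| ≤ b * a m}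
      rw [h1]
    have hBA : {x : EuclideanSpace ℝ (Fin N) | a (m-1) ≤ |u x| ∧ |u x| ≤ b * a (m-1)}
        = A (m-1) := rfl
    rw [hTA, hBA] at hkm
    -- hkm : ∫⁻ x in A m, F x ≤ C₀ * (∫⁻ x in A (m-1), G x) ^ (n/(n-2))
    have hexp : (2:ℝ)/n + (n-2)/n = 1 := by field_simp; ring
    calc (∫⁻ x in Sd m, F x) ≤ ∫⁻ x in A m, F x := hsub
      _ = (∫⁻ x in A m, F x)^((2:ℝ)/n) * (∫⁻ x in A m, F x)^((n-2)/n) := by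
          rw [← ENNReal.rpow_add _ _ h0 (hIfin m), hexp, ENNReal.rpow_one]
      _ ≤ (ENNReal.ofReal d)^((2:ℝ)/n) *
          (C₀ * (∫⁻ x in A (m-1), G x) ^ (n/(n-2)))^((n-2)/n) := by
          gcongr
          exact hIle m
      _ = (ENNReal.ofReal d)^((2:ℝ)/n) * C₀^((n-2)/n) * ∫⁻ x in A (m-1), G x := by
          rw [ENNReal.mul_rpow_of_nonneg _ _ (by positivity), ← ENNReal.rpow_mul,
            show (n/(n-2)) * ((n-2)/n) = 1 by field_simp, ENNReal.rpow_one, mul_assoc]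
  -- level comparison iff
  have hiff_le : ∀ (m : ℤ) {t : ℝ}, 0 < t →
      (a m ≤ t ↔ (m:ℝ) ≤ Real.logb 2 t * (2/(n-2))) := by
    intro m t ht
    have h2 : a m ≤ t ↔ (2:ℝ)^((m:ℝ)*(n-2)/2) ≤ (2:ℝ)^(Real.logb 2 t) := by
      rw [Real.rpow_logb two_pos (by norm_num) ht]
    rw [h2, Real.rpow_le_rpow_left_iff one_lt_two]
    constructor
    · intro h
      have h' := mul_le_mul_of_nonneg_right h (by positivity : (0:ℝ) ≤ 2/(n-2))
      calc (m:ℝ) = ((m:ℝ)*(n-2)/2) * (2/(n-2)) := by field_simp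
        _ ≤ Real.logb 2 t * (2/(n-2)) := h'
    · intro h
      have h' := mul_le_mul_of_nonneg_right h (by positivity : (0:ℝ) ≤ (n-2)/2)
      calc (m:ℝ)*(n-2)/2 = ((m:ℝ)) * ((n-2)/2) := by ring
        _ ≤ (Real.logb 2 t * (2/(n-2))) * ((n-2)/2) := h'
        _ = Real.logb 2 t := by field_simp
  have hiff_lt : ∀ (m : ℤ) {t : ℝ}, 0 < t →
      (t < a m ↔ Real.logb 2 t * (2/(n-2)) < (m:ℝ)) := by
    intro m t ht
    have := (hiff_le m ht).not
    rw [not_le, not_le] at this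
    exact this
  -- cover
  have hFind : ∀ x, x ∉ (⋃ m : ℤ, Sd m) → F x = 0 := by
    intro x hx
    by_contra hF
    have ht0 : |u x| ≠ 0 := by
      intro h0
      apply hF
      rw [hFdef]
      simp only [h0, Real.zero_rpow hp0.ne', ENNReal.ofReal_zero]
    have htpos : 0 < |u x| := (abs_nonneg _).lt_of_ne (Ne.symm ht0)
    set sx : ℝ := Real.logb 2 (|u x|) * (2/(n-2)) with hsxdef
    apply hx
    refine Set.mem_iUnion.2 ⟨⌊sx⌋, ?_, ?_⟩
    · exact (hiff_le ⌊sx⌋ htpos).2 (Int.floor_le sx)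
    · have h1 : |u x| < a (⌊sx⌋ + 1) := by
        refine (hiff_lt (⌊sx⌋ + 1) htpos).2 ?_
        push_cast
        exact Int.lt_floor_add_one sx
      rw [ha_succ ⌊sx⌋] at h1
      exact h1
  -- disjointness
  have hdisj : Pairwise (Function.onFun Disjoint Sd) := by
    have hlt : ∀ m m' : ℤ, m < m' → Disjoint (Sd m) (Sd m') := by
      intro m m' h
      rw [Set.disjoint_left]
      intro x hx hx'
      have h1 : |u x| < b * a m := hx.2
      have h2 : a m' ≤ |u x| := hx'.1
      have h3 : b * a m = a (m+1) := (ha_succ m).symm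
      have h4 : a (m+1) ≤ a m' := ha_mono (by omega)
      linarith
    intro m m' hne
    rcases hne.lt_or_gt with h | h
    · exact hlt _ _ h
    · exact (hlt _ _ h).symm
  -- decomposition
  have hsum : ∫⁻ x, F x = ∑' m : ℤ, ∫⁻ x in Sd m, F x := by
    have hind : F = (⋃ m : ℤ, Sd m).indicator F := by
      funext x
      by_cases hx : x ∈ ⋃ m : ℤ, Sd m
      · rw [Set.indicator_of_mem hx]
      · rw [Set.indicator_of_notMem hx]
        exact hFind x hx
    conv_lhs => rw [hind]
    rw [lintegral_indicator (MeasurableSet.iUnion hSmeas), lintegral_iUnion hSmeas hdisj]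
  -- double counting
  have h2G : ∑' m : ℤ, (∫⁻ x in A m, G x) ≤ 2 * ∫⁻ x, G x := by
    have hpt : ∀ x, (∑' m : ℤ, (A m).indicator G x) ≤ 2 * G x := by
      intro x
      by_cases ht0 : |u x| = 0
      · have hz : ∀ m : ℤ, (A m).indicator G x = 0 := by
          intro m
          rw [Set.indicator_of_notMem]
          intro hm
          have := hm.1
          rw [ht0] at this
          exact absurd this (not_le.2 (ha_pos m))
        simp [hz]
      · have htpos : 0 < |u x| := (abs_nonneg _).lt_of_ne (Ne.symm ht0)
        set sx : ℝ := Real.logb 2 (|u x|) * (2/(n-2)) with hsxdef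
        have hzero : ∀ m : ℤ, m ∉ ({⌊sx⌋ - 1, ⌊sx⌋} : Finset ℤ) → (A m).indicator G x = 0 := by
          intro m hm
          simp only [Finset.mem_insert, Finset.mem_singleton] at hm
          push_neg at hm
          rw [Set.indicator_of_notMem]
          intro hmem
          have hm1 : m ≤ ⌊sx⌋ := Int.le_floor.2 ((hiff_le m htpos).1 hmem.1)
          have hm2 : m ≤ ⌊sx⌋ - 2 := by omega
          have hup : |u x| ≤ a (m+1) := by rw [ha_succ m]; exact hmem.2
          have hlow : a (m+2) ≤ |u x| := by
            refine (hiff_le (m+2) htpos).2 ?_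
            have h5 : ((⌊sx⌋ : ℤ) : ℝ) ≤ sx := Int.floor_le sx
            push_cast
            push_cast at h5
            have : (m:ℝ) ≤ (⌊sx⌋ : ℝ) - 2 := by exact_mod_cast hm2
            linarith
          have hstrict : a (m+1) < a (m+2) := by
            have h6 : a (m+2) = b * a (m+1) := by
              rw [show (m:ℤ)+2 = (m+1)+1 by ring, ha_succ]
            rw [h6]
            exact lt_mul_of_one_lt_left (ha_pos _) hb1
          linarith
        calc (∑' m : ℤ, (A m).indicator G x)
            = ∑ m ∈ ({⌊sx⌋ - 1, ⌊sx⌋} : Finset ℤ), (A m).indicator G x := tsum_eq_sum hzero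
          _ = (A (⌊sx⌋ - 1)).indicator G x + (A ⌊sx⌋).indicator G x :=
              Finset.sum_pair (by omega)
          _ ≤ G x + G x := by
              gcongr <;> exact Set.indicator_apply_le (fun _ => le_rfl)
          _ = 2 * G x := (two_mul _).symm
    calc (∑' m : ℤ, ∫⁻ x in A m, G x)
        = ∑' m : ℤ, ∫⁻ x, (A m).indicator G x :=
          tsum_congr fun m => (lintegral_indicator (hAmeas m) G).symm
      _ = ∫⁻ x, ∑' m : ℤ, (A m).indicator G x :=
          (lintegral_tsum fun m => (hGmeas.indicator (hAmeas m)).aemeasurable).symm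
      _ ≤ ∫⁻ x, 2 * G x := lintegral_mono hpt
      _ = 2 * ∫⁻ x, G x := lintegral_const_mul' _ _ (by norm_num)
  -- total ENNReal bound
  have hreindex : (∑' m : ℤ, ∫⁻ x in A (m-1), G x) = ∑' m : ℤ, ∫⁻ x in A m, G x :=
    (Equiv.subRight (1:ℤ)).tsum_eq (fun k => ∫⁻ x in A k, G x)
  have hENN : ∫⁻ x, F x ≤
      (ENNReal.ofReal d)^((2:ℝ)/n) * C₀^((n-2)/n) * (2 * ∫⁻ x, G x) := by
    rw [hsum]
    calc (∑' m : ℤ, ∫⁻ x in Sd m, F x)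
        ≤ ∑' m : ℤ, (ENNReal.ofReal d)^((2:ℝ)/n) * C₀^((n-2)/n) * ∫⁻ x in A (m-1), G x :=
          ENNReal.tsum_le_tsum hchain
      _ = (ENNReal.ofReal d)^((2:ℝ)/n) * C₀^((n-2)/n) * ∑' m : ℤ, ∫⁻ x in A (m-1), G x :=
          ENNReal.tsum_mul_left
      _ = (ENNReal.ofReal d)^((2:ℝ)/n) * C₀^((n-2)/n) * ∑' m : ℤ, ∫⁻ x in A m, G x := by
          rw [hreindex]
      _ ≤ (ENNReal.ofReal d)^((2:ℝ)/n) * C₀^((n-2)/n) * (2 * ∫⁻ x, G x) :=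
          mul_le_mul_right h2G _
  -- translate G to a real integral
  have hGr : ∫⁻ x, G x = ENNReal.ofReal (∫ x, ‖fderiv ℝ u x‖^2) := by
    rw [ofReal_integral_eq_lintegral_ofReal hi2 (ae_of_all _ fun x => sq_nonneg _)]
    apply lintegral_congr
    intro x
    rw [hGdef]
    simp only
    rw [show ((2:ℝ)) = ((2:ℕ):ℝ) by norm_num, ENNReal.rpow_natCast,
      ENNReal.ofReal_pow (norm_nonneg _), ← coe_nnnorm, ENNReal.ofReal_coe_nnreal]
  -- final passage to the reals
  have hsupd : (⨆ m : ℤ, ∫ x in {x : EuclideanSpace ℝ (Fin N) |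
      (2 : ℝ) ^ ((m : ℝ) * (n - 2) / 2) ≤ |u x| ∧
      |u x| ≤ (2 : ℝ) ^ (((m : ℝ) + 1) * (n - 2) / 2)}, |u x| ^ p) = d :=
    iSup_congr fun m => by rw [hset m]
  rw [hsupd]
  have hcont1 : Continuous (fun x => |u x| ^ p) :=
    hucont.abs.rpow_const (fun x => Or.inr hp0.le)
  have hL : ∫ x, |u x| ^ p = (∫⁻ x, F x).toReal :=
    integral_eq_lintegral_of_nonneg_ae (ae_of_all _ hnonneg) hcont1.aestronglyMeasurable
  set H₂ : ℝ := ∫ x, ‖fderiv ℝ u x‖^2 with hH2def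
  have hH20 : 0 ≤ H₂ := integral_nonneg fun x => sq_nonneg _
  set H : ℝ := ∫ x, (‖gradient u x‖^2 + (u x)^2) with hHdef
  have hH0 : 0 ≤ H := integral_nonneg fun x => by positivity
  have hH2H : H₂ ≤ H := by
    apply integral_mono hi2 hi3
    intro x
    simp only
    rw [hgradnorm x]
    exact le_add_of_nonneg_right (sq_nonneg _)
  have hfin : (ENNReal.ofReal d)^((2:ℝ)/n) * C₀^((n-2)/n) * (2 * ENNReal.ofReal H₂) ≠ ⊤ :=
    ENNReal.mul_ne_top
      (ENNReal.mul_ne_top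
        (ENNReal.rpow_ne_top_of_nonneg (by positivity) ENNReal.ofReal_ne_top)
        (ENNReal.rpow_ne_top_of_nonneg (by positivity) hC₀top))
      (ENNReal.mul_ne_top (by norm_num) ENNReal.ofReal_ne_top)
  have hENN2 := hENN
  rw [hGr] at hENN2
  have hmain := ENNReal.toReal_mono hfin hENN2
  rw [hL]
  refine le_trans hmain ?_
  rw [ENNReal.toReal_mul, ENNReal.toReal_mul, ← ENNReal.toReal_rpow,
    ENNReal.toReal_ofReal hd0, ENNReal.toReal_mul, ENNReal.toReal_ofReal hH20,
    ENNReal.toReal_ofNat]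
  set c : ℝ := (C₀^((n-2)/n)).toReal with hcdef
  have hc0 : 0 ≤ c := ENNReal.toReal_nonneg
  have hD0 : (0:ℝ) ≤ d^((2:ℝ)/n) := by positivity
  calc d^((2:ℝ)/n) * c * (2 * H₂) = (2*c*H₂) * d^((2:ℝ)/n) := by ring
    _ ≤ (2*c*H) * d^((2:ℝ)/n) := by
        apply mul_le_mul_of_nonneg_right _ hD0
        apply mul_le_mul_of_nonneg_left hH2H (by positivity)
    _ ≤ ((2*c+1)*H) * d^((2:ℝ)/n) := by
        apply mul_le_mul_of_nonneg_right _ hD0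
        apply mul_le_mul_of_nonneg_right _ hH0
        linarith
    _ = (2*c+1) * H * d^((2:ℝ)/n) := by ring

end
end

section
/- Let N ≥ 3 and 2* = 2N/(N−2). There exists a constant C > 0, depending only on N, such that for every u ∈ C_c^∞(ℝ^N) and every real number j > 0 one has ( ∫_{{x ∈ ℝ^N : j ≤ |u(x)| ≤ 2^{(N−2)/2} j}} |u|^{2*} dx )^{2/2*} ≤ C ∫_{{x ∈ ℝ^N : 2^{−(N−2)/2} j ≤ |u(x)| ≤ 2^{N−2} j}} (|∇u|² + u²) dx. -/
open MeasureTheory Filter Topology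
open scoped ENNReal NNReal
open scoped RealInnerProductSpace

noncomputable section

lemma st_deriv_zero_of_neg {t : ℝ} (ht : t < 0) : deriv Real.smoothTransition t = 0 := by
  have h : Real.smoothTransition =ᶠ[𝓝 t] fun _ => (0 : ℝ) := by
    filter_upwards [Iio_mem_nhds ht] with s hs
    exact Real.smoothTransition.zero_of_nonpos (le_of_lt hs)
  rw [h.deriv_eq, deriv_const]

lemma st_deriv_zero_of_one_lt {t : ℝ} (ht : 1 < t) : deriv Real.smoothTransition t = 0 := by
  have h : Real.smoothTransition =ᶠ[𝓝 t] fun _ => (1 : ℝ) := by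
    filter_upwards [Ioi_mem_nhds ht] with s hs
    exact Real.smoothTransition.one_of_one_le (le_of_lt hs)
  rw [h.deriv_eq, deriv_const]

lemma st_deriv_bound : ∃ M : ℝ, 0 ≤ M ∧ ∀ t, |deriv Real.smoothTransition t| ≤ M := by
  have hcont : Continuous (deriv Real.smoothTransition) :=
    (Real.smoothTransition.contDiff (n := (⊤ : ℕ∞))).continuous_deriv (by exact_mod_cast le_top)
  have hsupp : HasCompactSupport (deriv Real.smoothTransition) := by
    apply HasCompactSupport.intro (isCompact_Icc (a := (0:ℝ)) (b := 1))
    intro t ht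
    rcases not_and_or.1 (fun hc => ht (Set.mem_Icc.2 hc)) with h | h
    · exact st_deriv_zero_of_neg (not_le.mp h)
    · exact st_deriv_zero_of_one_lt (not_le.mp h)
  obtain ⟨M, hM⟩ := hsupp.exists_bound_of_continuous hcont
  exact ⟨M, le_trans (norm_nonneg _) (hM 0), fun t => by simpa using hM t⟩

set_option maxHeartbeats 2000000 in
/-- Sobolev inequality on dyadic level sets. -/
theorem struwe_solimini_stmt1 (N : ℕ) (hN : 3 ≤ N) :
    ∃ C : ℝ, 0 < C ∧
      ∀ u : EuclideanSpace ℝ (Fin N) → ℝ, ContDiff ℝ (⊤ : ℕ∞) u → HasCompactSupport u →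
        ∀ j : ℝ, 0 < j →
          (∫ x in {x : EuclideanSpace ℝ (Fin N) |
              j ≤ |u x| ∧ |u x| ≤ (2 : ℝ) ^ (((N : ℝ) - 2) / 2) * j},
            |u x| ^ ((2 * (N : ℝ)) / ((N : ℝ) - 2))) ^ (((N : ℝ) - 2) / (N : ℝ)) ≤
          C * ∫ x in {x : EuclideanSpace ℝ (Fin N) |
              (2 : ℝ) ^ (-(((N : ℝ) - 2) / 2)) * j ≤ |u x| ∧ |u x| ≤ (2 : ℝ) ^ ((N : ℝ) - 2) * j},
            (‖gradient u x‖ ^ 2 + (u x) ^ 2) := by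
  have hN3 : (3 : ℝ) ≤ (N : ℝ) := by exact_mod_cast hN
  set n : ℝ := (N : ℝ) with hn
  have hn2 : (1 : ℝ) ≤ n - 2 := by linarith
  have hnpos : (0 : ℝ) < n := by linarith
  have hn2ne : n - 2 ≠ 0 := by linarith
  set pr : ℝ := 2 * n / (n - 2) with hprdef
  have hpr_pos : 0 < pr := by positivity
  set q : ℝ := (n - 2) / n with hqdef
  have hq_pos : 0 < q := by positivity
  have hprq : pr * q = 2 := by rw [hprdef, hqdef]; field_simp
  set a : ℝ := (2 : ℝ) ^ (-((n - 2) / 2)) with hadef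
  have ha0 : 0 < a := Real.rpow_pos_of_pos two_pos _
  have ha1 : a < 1 := Real.rpow_lt_one_of_one_lt_of_neg one_lt_two (by linarith)
  set b : ℝ := (2 : ℝ) ^ ((n - 2) / 2) with hbdef
  have hb0 : 0 < b := Real.rpow_pos_of_pos two_pos _
  have hb1 : 1 ≤ b := Real.one_le_rpow one_le_two (by linarith)
  set c : ℝ := (2 : ℝ) ^ (n - 2) with hcdef
  have hc1 : 1 ≤ c := Real.one_le_rpow one_le_two (by linarith)
  set d : ℝ := 1 - a ^ 2 with hddef
  have hd : 0 < d := by nlinarith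
  obtain ⟨M, hM0, hM⟩ := st_deriv_bound
  set K : ℝ := 2 * (M + 1) / d with hKdef
  have hK : 0 < K := by positivity
  set SC : ℝ := (eLpNormLESNormFDerivOfEqInnerConst
    (volume : Measure (EuclideanSpace ℝ (Fin N))) 2 : ℝ) with hSC
  have hSC0 : 0 ≤ SC := (eLpNormLESNormFDerivOfEqInnerConst
    (volume : Measure (EuclideanSpace ℝ (Fin N))) 2).coe_nonneg
  refine ⟨b ^ 2 * (SC + 1) ^ 2 * K ^ 2, by positivity, ?_⟩
  intro u hu hsupp j hj
  set A : Set (EuclideanSpace ℝ (Fin N)) := {x | j ≤ |u x| ∧ |u x| ≤ b * j} with hA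
  set B : Set (EuclideanSpace ℝ (Fin N)) := {x | a * j ≤ |u x| ∧ |u x| ≤ c * j} with hB
  set B' : Set (EuclideanSpace ℝ (Fin N)) := {x | a * j ≤ |u x| ∧ |u x| ≤ j} with hB'
  have hB'B : B' ⊆ B := fun x hx => ⟨hx.1, hx.2.trans (le_mul_of_one_le_left hj.le hc1)⟩
  have hucont : Continuous u := hu.continuous
  have hmA : MeasurableSet A :=
    (measurableSet_le measurable_const hucont.abs.measurable).inter
      (measurableSet_le hucont.abs.measurable measurable_const)
  have hmB' : MeasurableSet B' :=
    (measurableSet_le measurable_const hucont.abs.measurable).inter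
      (measurableSet_le hucont.abs.measurable measurable_const)
  -- the truncation
  set g : ℝ → ℝ := fun t => j * Real.smoothTransition (((t / j) ^ 2 - a ^ 2) / d) with hg
  set w : EuclideanSpace ℝ (Fin N) → ℝ := fun x => g (u x) with hw
  set g' : ℝ → ℝ := fun t =>
    j * (deriv Real.smoothTransition (((t / j) ^ 2 - a ^ 2) / d) *
      (2 * (t / j) ^ 1 * (1 / j) / d)) with hg'
  have hinner : ContDiff ℝ ((⊤ : ℕ∞) : WithTop ℕ∞) fun t : ℝ => ((t / j) ^ 2 - a ^ 2) / d :=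
    (((contDiff_id.div_const j).pow 2).sub contDiff_const).div_const d
  have houter : ContDiff ℝ ((⊤ : ℕ∞) : WithTop ℕ∞) fun t : ℝ => Real.smoothTransition (((t / j) ^ 2 - a ^ 2) / d) :=
    (Real.smoothTransition.contDiff (n := (⊤ : ℕ∞))).comp hinner
  have hg_cd : ContDiff ℝ ((⊤ : ℕ∞) : WithTop ℕ∞) g := contDiff_const.mul houter
  have hw_cd : ContDiff ℝ ((⊤ : ℕ∞) : WithTop ℕ∞) w := hg_cd.comp (hu.of_le (by simp))
  have hw_supp : HasCompactSupport w := by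
    refine hsupp.comp_left (g := g) ?_
    have h0 : ((0 / j) ^ 2 - a ^ 2) / d ≤ 0 :=
      div_nonpos_iff.2 (Or.inr ⟨by rw [zero_div]; nlinarith, hd.le⟩)
    rw [hg]
    simp only []
    rw [Real.smoothTransition.zero_of_nonpos h0, mul_zero]
  have hw_nonneg : ∀ x, 0 ≤ w x := fun x =>
    mul_nonneg hj.le (Real.smoothTransition.nonneg _)
  have hw_le : ∀ x, w x ≤ j := fun x => by
    simpa using mul_le_mul_of_nonneg_left (Real.smoothTransition.le_one _) hj.le
  have hwj : ∀ x, j ≤ |u x| → w x = j := by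
    intro x hx
    have h2 : j ^ 2 ≤ (u x) ^ 2 := by nlinarith [sq_abs (u x), abs_nonneg (u x)]
    have h1 : 1 ≤ (u x / j) ^ 2 := by
      rw [div_pow, le_div_iff₀ (by positivity), one_mul]; exact h2
    have h3 : 1 ≤ ((u x / j) ^ 2 - a ^ 2) / d := by
      rw [le_div_iff₀ hd, one_mul, hddef]; linarith
    simp only [hw, hg]
    rw [Real.smoothTransition.one_of_one_le h3, mul_one]
  have hst_diff : Differentiable ℝ Real.smoothTransition :=
    (Real.smoothTransition.contDiff (n := 1)).differentiable one_ne_zero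
  have hgd : ∀ t : ℝ, HasDerivAt g (g' t) t := by
    intro t
    have h1 : HasDerivAt (fun t : ℝ => ((t / j) ^ 2 - a ^ 2) / d)
        (((2:ℕ) * (t / j) ^ (2 - 1) * (1 / j)) / d) t :=
      ((((hasDerivAt_id t).div_const j).pow 2).sub_const (a ^ 2)).div_const d
    have h2 : HasDerivAt Real.smoothTransition
        (deriv Real.smoothTransition (((t / j) ^ 2 - a ^ 2) / d)) (((t / j) ^ 2 - a ^ 2) / d) :=
      (hst_diff _).hasDerivAt
    have h3 := (h2.comp t h1).const_mul j
    exact h3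
  have hg'_zero_lt : ∀ t : ℝ, |t| < a * j → g' t = 0 := by
    intro t ht
    have h1 : |t / j| < a := by
      rw [abs_div, abs_of_pos hj]; exact (div_lt_iff₀ hj).2 ht
    have h2 : (t / j) ^ 2 < a ^ 2 := by
      rw [← sq_abs]; exact pow_lt_pow_left₀ h1 (abs_nonneg _) two_ne_zero
    have h3 : ((t / j) ^ 2 - a ^ 2) / d < 0 := div_neg_of_neg_of_pos (by linarith) hd
    simp only [hg']
    rw [st_deriv_zero_of_neg h3, zero_mul, mul_zero]
  have hg'_zero_gt : ∀ t : ℝ, j < |t| → g' t = 0 := by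
    intro t ht
    have h2 : 1 < (t / j) ^ 2 := by
      have h1 : 1 < |t / j| := by rw [abs_div, abs_of_pos hj, lt_div_iff₀ hj, one_mul]; exact ht
      calc (1:ℝ) = 1 ^ 2 := by norm_num
        _ < |t / j| ^ 2 := by exact pow_lt_pow_left₀ h1 (by norm_num) two_ne_zero
        _ = (t / j) ^ 2 := sq_abs _
    have h3 : 1 < ((t / j) ^ 2 - a ^ 2) / d := by
      rw [lt_div_iff₀ hd, one_mul, hddef]; linarith
    simp only [hg']
    rw [st_deriv_zero_of_one_lt h3, zero_mul, mul_zero]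
  have hg'_bound : ∀ t : ℝ, |g' t| ≤ K := by
    intro t
    rcases le_or_gt |t| j with h | h
    · have e : |g' t| = j * (|deriv Real.smoothTransition (((t / j) ^ 2 - a ^ 2) / d)| *
          (2 * (|t| / j) * (1 / j) / d)) := by
        simp only [hg', abs_mul, abs_div, abs_pow, abs_of_pos hj, abs_of_pos hd, abs_one,
          abs_two, pow_one]
        try ring
      rw [e]
      have h1 : j * (|deriv Real.smoothTransition (((t / j) ^ 2 - a ^ 2) / d)| *
          (2 * (|t| / j) * (1 / j) / d)) ≤ j * (M * (2 * 1 * (1 / j) / d)) := by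
        gcongr
        · exact hM _
        · rw [div_le_one hj]; exact h
      refine h1.trans ?_
      have h2 : j * (M * (2 * 1 * (1 / j) / d)) = 2 * M / d := by field_simp
      rw [h2, hKdef]
      gcongr
      linarith
    · rw [hg'_zero_gt t h, abs_zero]; exact hK.le
  have hfd : ∀ x, fderiv ℝ w x = g' (u x) • fderiv ℝ u x := fun x =>
    ((hgd (u x)).comp_hasFDerivAt x ((hu.differentiable (by simp) x).hasFDerivAt)).fderiv
  have hgradnorm : ∀ x, ‖gradient u x‖ = ‖fderiv ℝ u x‖ := fun x => by
    rw [gradient]; exact LinearIsometryEquiv.norm_map _ _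
  -- integrability
  have h_int_upr : Integrable (fun x => |u x| ^ pr)
      (volume : Measure (EuclideanSpace ℝ (Fin N))) := by
    have hc : Continuous fun x => |u x| ^ pr :=
      hucont.abs.rpow_const fun x => Or.inr hpr_pos.le
    have hs : HasCompactSupport fun x => |u x| ^ pr :=
      hsupp.comp_left (g := fun t => |t| ^ pr) (by simp [Real.zero_rpow hpr_pos.ne'])
    exact hc.integrable_of_hasCompactSupport hs
  have h_int_wpr : Integrable (fun x => (w x) ^ pr)
      (volume : Measure (EuclideanSpace ℝ (Fin N))) := by
    have hc : Continuous fun x => (w x) ^ pr :=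
      hw_cd.continuous.rpow_const fun x => Or.inr hpr_pos.le
    have hs : HasCompactSupport fun x => (w x) ^ pr :=
      hw_supp.comp_left (g := fun t => t ^ pr) (Real.zero_rpow hpr_pos.ne')
    exact hc.integrable_of_hasCompactSupport hs
  have h_fw_cont : Continuous (fderiv ℝ w) := hw_cd.continuous_fderiv (by simp)
  have h_fw_supp : HasCompactSupport (fderiv ℝ w) := HasCompactSupport.fderiv (𝕜 := ℝ) hw_supp
  have h_int_fw2 : Integrable (fun x => ‖fderiv ℝ w x‖ ^ 2)
      (volume : Measure (EuclideanSpace ℝ (Fin N))) := by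
    have hs : HasCompactSupport fun x => ‖fderiv ℝ w x‖ ^ 2 :=
      h_fw_supp.comp_left (g := fun v => ‖v‖ ^ 2) (by simp)
    exact ((h_fw_cont.norm.pow 2)).integrable_of_hasCompactSupport hs
  have h_fu_cont : Continuous (fderiv ℝ u) := hu.continuous_fderiv (by simp)
  have h_fu_supp : HasCompactSupport (fderiv ℝ u) := HasCompactSupport.fderiv (𝕜 := ℝ) hsupp
  have h_int_fu2 : Integrable (fun x => ‖fderiv ℝ u x‖ ^ 2)
      (volume : Measure (EuclideanSpace ℝ (Fin N))) := by
    have hs : HasCompactSupport fun x => ‖fderiv ℝ u x‖ ^ 2 :=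
      h_fu_supp.comp_left (g := fun v => ‖v‖ ^ 2) (by simp)
    exact ((h_fu_cont.norm.pow 2)).integrable_of_hasCompactSupport hs
  have h_int_u2 : Integrable (fun x => (u x) ^ 2)
      (volume : Measure (EuclideanSpace ℝ (Fin N))) := by
    have hs : HasCompactSupport fun x => (u x) ^ 2 :=
      hsupp.comp_left (g := fun t => t ^ 2) (by simp)
    exact (hucont.pow 2).integrable_of_hasCompactSupport hs
  have h_int_gu2 : Integrable (fun x => ‖fderiv ℝ u x‖ ^ 2 + (u x) ^ 2)
      (volume : Measure (EuclideanSpace ℝ (Fin N))) := h_int_fu2.add h_int_u2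
  set J : ℝ := ∫ x, (w x) ^ pr with hJ
  have hJ0 : 0 ≤ J := integral_nonneg fun x => Real.rpow_nonneg (hw_nonneg x) _
  set G : ℝ := ∫ x, ‖fderiv ℝ w x‖ ^ 2 with hG
  have hG0 : 0 ≤ G := integral_nonneg fun x => sq_nonneg _
  set R : ℝ := ∫ x in B, (‖gradient u x‖ ^ 2 + (u x) ^ 2) with hR
  -- step 1 : ∫_A |u|^pr ≤ b^pr * J
  have step1 : (∫ x in A, |u x| ^ pr) ≤ b ^ pr * J := by
    calc (∫ x in A, |u x| ^ pr) ≤ ∫ x in A, b ^ pr * (w x) ^ pr := by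
          refine setIntegral_mono_on h_int_upr.integrableOn
            (h_int_wpr.const_mul _).integrableOn hmA ?_
          intro x hx
          have h1 : |u x| ≤ b * w x := by rw [hwj x hx.1]; exact hx.2
          calc |u x| ^ pr ≤ (b * w x) ^ pr :=
                Real.rpow_le_rpow (abs_nonneg _) h1 hpr_pos.le
            _ = b ^ pr * (w x) ^ pr := Real.mul_rpow hb0.le (hw_nonneg x)
      _ = b ^ pr * ∫ x in A, (w x) ^ pr := integral_const_mul _ _
      _ ≤ b ^ pr * J := by
          refine mul_le_mul_of_nonneg_left ?_ (by positivity)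
          exact setIntegral_le_integral h_int_wpr
            (Eventually.of_forall fun x => Real.rpow_nonneg (hw_nonneg x) _)
  -- step 2 : Sobolev  J^(1/pr) ≤ (SC+1) * G^(1/2)
  have step2 : J ^ (1 / pr) ≤ (SC + 1) * G ^ ((1 : ℝ) / 2) := by
    set p' : ℝ≥0 := ⟨pr, hpr_pos.le⟩ with hp'def
    have hfin : Module.finrank ℝ (EuclideanSpace ℝ (Fin N)) = N := finrank_euclideanSpace_fin
    have hp'inv : ((p' : ℝ))⁻¹ = ((2 : ℝ≥0) : ℝ)⁻¹ -
        ((Module.finrank ℝ (EuclideanSpace ℝ (Fin N)) : ℝ))⁻¹ := by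
      rw [hfin]
      show pr⁻¹ = (2:ℝ)⁻¹ - (N:ℝ)⁻¹
      rw [hprdef, ← hn]
      field_simp
      try ring
    have sob := eLpNorm_le_eLpNorm_fderiv_of_eq_inner (μ := (volume : Measure (EuclideanSpace ℝ (Fin N))))
      (hw_cd.of_le (mod_cast le_top)) hw_supp (p := 2) (p' := p') one_le_two
      (by rw [hfin]; omega) hp'inv
    have hmemw : MemLp w (↑p') volume :=
      hw_cd.continuous.memLp_of_hasCompactSupport hw_supp
    have hmemfw : MemLp (fderiv ℝ w) 2 volume :=
      h_fw_cont.memLp_of_hasCompactSupport h_fw_supp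
    have hp'ne : ((p' : ℝ≥0∞)) ≠ 0 := by
      simp only [ne_eq, ENNReal.coe_eq_zero]
      exact fun hc => hpr_pos.ne' (congrArg NNReal.toReal hc)
    have e1 : eLpNorm w (↑p') volume = ENNReal.ofReal (J ^ (1 / pr)) := by
      rw [hmemw.eLpNorm_eq_integral_rpow_norm hp'ne ENNReal.coe_ne_top]
      congr 1
      have ht : ((p' : ℝ≥0∞)).toReal = pr := by rw [ENNReal.coe_toReal]; rfl
      rw [ht, one_div, hJ]
      congr 1
      refine integral_congr_ae (Eventually.of_forall fun x => ?_)
      simp [Real.norm_eq_abs, abs_of_nonneg (hw_nonneg x)]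
    have e2 : eLpNorm (fderiv ℝ w) 2 volume = ENNReal.ofReal (G ^ ((1:ℝ) / 2)) := by
      rw [hmemfw.eLpNorm_eq_integral_rpow_norm (by norm_num) (by norm_num)]
      congr 1
      simp only [ENNReal.toReal_ofNat, hG]
      rw [show ((2:ℝ))⁻¹ = (1:ℝ)/2 by norm_num]
      congr 1
      refine integral_congr_ae (Eventually.of_forall fun x => ?_)
      simp [Real.rpow_two]
    simp only [ENNReal.coe_ofNat, NNReal.coe_ofNat] at sob
    rw [e1, e2] at sob
    have e3 : (↑(eLpNormLESNormFDerivOfEqInnerConst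
        (volume : Measure (EuclideanSpace ℝ (Fin N))) 2) : ℝ≥0∞) *
        ENNReal.ofReal (G ^ ((1:ℝ) / 2)) = ENNReal.ofReal (SC * G ^ ((1:ℝ) / 2)) := by
      rw [ENNReal.ofReal_mul hSC0, ENNReal.ofReal_coe_nnreal]
    rw [e3] at sob
    have h4 : J ^ (1 / pr) ≤ SC * G ^ ((1:ℝ) / 2) :=
      (ENNReal.ofReal_le_ofReal_iff (by positivity)).1 sob
    refine h4.trans ?_
    exact mul_le_mul_of_nonneg_right (by linarith) (Real.rpow_nonneg hG0 _)
  -- step 3 : G ≤ K^2 * R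
  have step3 : G ≤ K ^ 2 * R := by
    have hpt : ∀ x, ‖fderiv ℝ w x‖ ^ 2 ≤
        B'.indicator (fun x => K ^ 2 * ‖fderiv ℝ u x‖ ^ 2) x := by
      intro x
      by_cases hx : x ∈ B'
      · rw [Set.indicator_of_mem hx, hfd x, norm_smul, Real.norm_eq_abs, mul_pow]
        exact mul_le_mul_of_nonneg_right
          (pow_le_pow_left₀ (abs_nonneg _) (hg'_bound _) 2)
          (pow_nonneg (norm_nonneg _) 2)
      · rw [Set.indicator_of_notMem hx]
        have hz : g' (u x) = 0 := by
          simp only [hB', Set.mem_setOf_eq, not_and, not_le] at hx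
          rcases le_or_gt (a * j) |u x| with h | h
          · exact hg'_zero_gt _ (hx h)
          · exact hg'_zero_lt _ h
        rw [hfd x, hz, zero_smul]
        simp
    calc G ≤ ∫ x, B'.indicator (fun x => K ^ 2 * ‖fderiv ℝ u x‖ ^ 2) x :=
          integral_mono h_int_fw2 ((h_int_fu2.const_mul _).indicator hmB') hpt
      _ = K ^ 2 * ∫ x in B', ‖fderiv ℝ u x‖ ^ 2 := by
          rw [integral_indicator hmB', integral_const_mul]
      _ ≤ K ^ 2 * R := by
          refine mul_le_mul_of_nonneg_left ?_ (by positivity)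
          have h1 : (∫ x in B', ‖fderiv ℝ u x‖ ^ 2) ≤
              ∫ x in B', (‖fderiv ℝ u x‖ ^ 2 + (u x) ^ 2) :=
            setIntegral_mono_on h_int_fu2.integrableOn h_int_gu2.integrableOn hmB'
              (fun x _ => by nlinarith [sq_nonneg (u x)])
          have h2 : (∫ x in B', (‖fderiv ℝ u x‖ ^ 2 + (u x) ^ 2)) ≤
              ∫ x in B, (‖fderiv ℝ u x‖ ^ 2 + (u x) ^ 2) :=
            setIntegral_mono_set h_int_gu2.integrableOn
              (Eventually.of_forall fun x => add_nonneg (sq_nonneg _) (sq_nonneg _))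
              (HasSubset.Subset.eventuallyLE hB'B)
          have h3 : R = ∫ x in B, (‖fderiv ℝ u x‖ ^ 2 + (u x) ^ 2) := by
            simp only [hR, hgradnorm]
          rw [h3]
          linarith
  have hmB : MeasurableSet B :=
    (measurableSet_le measurable_const hucont.abs.measurable).inter
      (measurableSet_le hucont.abs.measurable measurable_const)
  have hR0 : 0 ≤ R := setIntegral_nonneg hmB fun x _ => add_nonneg (sq_nonneg _) (sq_nonneg _)
  -- assemble
  calc (∫ x in A, |u x| ^ pr) ^ q ≤ (b ^ pr * J) ^ q := by
        refine Real.rpow_le_rpow ?_ step1 hq_pos.le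
        exact setIntegral_nonneg hmA fun x _ => Real.rpow_nonneg (abs_nonneg _) _
    _ = b ^ 2 * J ^ q := by
        rw [Real.mul_rpow (by positivity) hJ0]
        congr 1
        rw [← Real.rpow_mul hb0.le, hprq, Real.rpow_two]
    _ ≤ b ^ 2 * ((SC + 1) ^ 2 * G) := by
        refine mul_le_mul_of_nonneg_left ?_ (by positivity)
        have hq2 : q = 1 / pr * 2 := by
          field_simp
          linarith [hprq]
        have e4 : J ^ q = (J ^ (1 / pr)) ^ (2:ℕ) := by
          rw [← Real.rpow_natCast (J ^ (1 / pr)) 2, ← Real.rpow_mul hJ0, hq2]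
          norm_num
        have e5 : (G ^ ((1:ℝ) / 2)) ^ (2:ℕ) = G := by
          rw [← Real.rpow_natCast (G ^ ((1:ℝ)/2)) 2, ← Real.rpow_mul hG0]
          norm_num
        calc J ^ q = (J ^ (1 / pr)) ^ (2:ℕ) := e4
          _ ≤ ((SC + 1) * G ^ ((1:ℝ) / 2)) ^ (2:ℕ) :=
              pow_le_pow_left₀ (Real.rpow_nonneg hJ0 _) step2 2
          _ = (SC + 1) ^ 2 * (G ^ ((1:ℝ)/2)) ^ (2:ℕ) := mul_pow _ _ _
          _ = (SC + 1) ^ 2 * G := by rw [e5]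
    _ ≤ b ^ 2 * ((SC + 1) ^ 2 * (K ^ 2 * R)) := by
        have h1 : (SC + 1) ^ 2 * G ≤ (SC + 1) ^ 2 * (K ^ 2 * R) :=
          mul_le_mul_of_nonneg_left step3 (by positivity)
        exact mul_le_mul_of_nonneg_left h1 (by positivity)
    _ = b ^ 2 * (SC + 1) ^ 2 * K ^ 2 * R := by ring
end
end

section
/- Let N ≥ 3, 2* = 2N/(N−2), let v ∈ C_c^∞(ℝ^N), let m ∈ ℕ, and let y_1, …, y_m be pairwise distinct points of ℝ^N. For t ≥ 1 define u_t(x) = Σ_{n=1}^m t^{(N−2)/2} v(t(x − y_n)). Then: (i) for every p ∈ (2, 2*), ∫_{ℝ^N} |u_t|^p dx → 0 as t → ∞; (ii) sup_{t ≥ 1} ∫_{ℝ^N}(|∇u_t|² + u_t²) dx < ∞; (iii) ∫_{ℝ^N} |u_t|^{2*} dx → m ∫_{ℝ^N} |v|^{2*} dx as t → ∞. -/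
open MeasureTheory Filter Topology
open scoped RealInnerProductSpace

noncomputable section

namespace StruweAux3

variable {N : ℕ}

lemma integral_smul_sub (g : EuclideanSpace ℝ (Fin N) → ℝ) {t : ℝ} (ht : 0 < t)
    (y : EuclideanSpace ℝ (Fin N)) :
    ∫ x, g (t • (x - y)) = t ^ (-(N : ℝ)) * ∫ x, g x := by
  have h1 : (∫ x, g (t • (x - y))) = ∫ x, g (t • x) :=
    integral_sub_right_eq_self (fun z => g (t • z)) y
  rw [h1, MeasureTheory.Measure.integral_comp_smul volume g t, finrank_euclideanSpace_fin,
    smul_eq_mul, abs_of_nonneg (by positivity), Real.rpow_neg ht.le, Real.rpow_natCast]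

lemma hcs_comp {β : Type*} [TopologicalSpace β] [Zero β]
    {g : EuclideanSpace ℝ (Fin N) → β} (hg : HasCompactSupport g)
    {t : ℝ} (ht : 0 < t) (y : EuclideanSpace ℝ (Fin N)) :
    HasCompactSupport (fun x => g (t • (x - y))) := by
  have := hg.comp_homeomorph ((Homeomorph.subRight y).trans (Homeomorph.smulOfNeZero t ht.ne'))
  simpa [Function.comp_def] using this

lemma cont_comp {β : Type*} [TopologicalSpace β] {g : EuclideanSpace ℝ (Fin N) → β}
    (hg : Continuous g) (t : ℝ) (y : EuclideanSpace ℝ (Fin N)) :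
    Continuous (fun x => g (t • (x - y))) :=
  hg.comp ((continuous_id.sub continuous_const).const_smul t)

lemma integral_bubble_rpow (v : EuclideanSpace ℝ (Fin N) → ℝ) {t : ℝ} (ht : 0 < t)
    (y : EuclideanSpace ℝ (Fin N)) (c p : ℝ) :
    ∫ x, |t ^ c * v (t • (x - y))| ^ p
      = t ^ (c * p - N) * ∫ x, |v x| ^ p := by
  have hpt : ∀ a : ℝ, |t ^ c * a| ^ p = t ^ (c * p) * |a| ^ p := by
    intro a
    rw [abs_mul, abs_of_pos (Real.rpow_pos_of_pos ht c),
      Real.mul_rpow (Real.rpow_pos_of_pos ht c).le (abs_nonneg a), ← Real.rpow_mul ht.le]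
  simp_rw [hpt]
  rw [integral_const_mul, integral_smul_sub (fun z => |v z| ^ p) ht y, ← mul_assoc,
    ← Real.rpow_add ht]
  ring_nf

lemma hasGradientAt_bubble {v : EuclideanSpace ℝ (Fin N) → ℝ} (hv : ContDiff ℝ (⊤ : ℕ∞) v)
    (c t : ℝ) (y x : EuclideanSpace ℝ (Fin N)) :
    HasGradientAt (fun x => c * v (t • (x - y)))
      ((c * t) • gradient v (t • (x - y))) x := by
  have h1 : HasFDerivAt (fun x : EuclideanSpace ℝ (Fin N) => t • (x - y))
      (t • ContinuousLinearMap.id ℝ (EuclideanSpace ℝ (Fin N))) x :=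
    ((hasFDerivAt_id x).sub_const y).const_smul t
  have h2 : HasFDerivAt v (fderiv ℝ v (t • (x - y))) (t • (x - y)) :=
    (hv.differentiable (by simp) (t • (x - y))).hasFDerivAt
  have h3 := (h2.comp x h1).const_mul c
  rw [hasGradientAt_iff_hasFDerivAt]
  have key : (InnerProductSpace.toDual ℝ (EuclideanSpace ℝ (Fin N)))
      ((c * t) • (InnerProductSpace.toDual ℝ (EuclideanSpace ℝ (Fin N))).symm
        (fderiv ℝ v (t • (x - y))))
      = c • (fderiv ℝ v (t • (x - y))).comp
          (t • ContinuousLinearMap.id ℝ (EuclideanSpace ℝ (Fin N))) := by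
    ext w
    simp only [ContinuousLinearMap.coe_smul', Pi.smul_apply, ContinuousLinearMap.coe_comp',
      Function.comp_apply, ContinuousLinearMap.coe_id', id_eq, smul_eq_mul,
      ContinuousLinearMap.map_smul]
    rw [_root_.map_smul, LinearIsometryEquiv.apply_symm_apply]
    simp [smul_eq_mul]
    ring
  show HasFDerivAt _ ((InnerProductSpace.toDual ℝ (EuclideanSpace ℝ (Fin N)))
      ((c * t) • (InnerProductSpace.toDual ℝ (EuclideanSpace ℝ (Fin N))).symm
        (fderiv ℝ v (t • (x - y))))) x
  rw [key]
  exact h3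

lemma abs_sum_rpow {m : ℕ} (f : Fin m → ℝ) {p : ℝ} (hp : p ≠ 0)
    (h : ∀ n n', f n ≠ 0 → f n' ≠ 0 → n = n') :
    |∑ n, f n| ^ p = ∑ n, |f n| ^ p := by
  by_cases hz : ∀ n, f n = 0
  · simp [hz, Real.zero_rpow hp]
  · push_neg at hz
    obtain ⟨n₀, hn₀⟩ := hz
    have h1 : ∑ n, f n = f n₀ :=
      Finset.sum_eq_single n₀ (fun a _ ha => by
        by_contra hfa; exact ha (h a n₀ hfa hn₀)) (by simp)
    have h2 : ∑ n, |f n| ^ p = |f n₀| ^ p :=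
      Finset.sum_eq_single n₀ (fun a _ ha => by
        rcases eq_or_ne (f a) 0 with h0 | h0
        · simp [h0, Real.zero_rpow hp]
        · exact absurd (h a n₀ h0 hn₀) ha) (by simp)
    rw [h1, h2]

lemma integrable_abs_rpow {g : EuclideanSpace ℝ (Fin N) → ℝ} (hg : Continuous g)
    (hgc : HasCompactSupport g) {p : ℝ} (hp : 0 < p) :
    Integrable (fun x => |g x| ^ p) :=
  (hg.abs.rpow_const (fun _ => Or.inr hp.le)).integrable_of_hasCompactSupport
    (hgc.comp_left (g := fun a : ℝ => |a| ^ p) (by simp [Real.zero_rpow hp.ne']))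

lemma hasGradientAt_sum {E : Type*} [NormedAddCommGroup E] [InnerProductSpace ℝ E]
    [CompleteSpace E] {ι : Type*} (s : Finset ι) (f : ι → E → ℝ) (g : ι → E) (x : E)
    (h : ∀ i ∈ s, HasGradientAt (f i) (g i) x) :
    HasGradientAt (fun x => ∑ i ∈ s, f i x) (∑ i ∈ s, g i) x := by
  rw [hasGradientAt_iff_hasFDerivAt]
  have hmap : (InnerProductSpace.toDual ℝ E) (∑ i ∈ s, g i)
      = ∑ i ∈ s, (InnerProductSpace.toDual ℝ E) (g i) := map_sum _ _ _
  rw [hmap]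
  exact HasFDerivAt.fun_sum fun i hi => hasGradientAt_iff_hasFDerivAt.1 (h i hi)

end StruweAux3

open StruweAux3 in
/-- a sum of m shrinking bubbles at distinct points vanishes in subcritical
L^p, is bounded in H¹, and its critical L^{2*} mass converges to m times the mass of the
profile. -/
theorem struwe_solimini_stmt3 (N : ℕ) (hN : 3 ≤ N)
    (v : EuclideanSpace ℝ (Fin N) → ℝ) (hv : ContDiff ℝ (⊤ : ℕ∞) v) (hvc : HasCompactSupport v)
    (m : ℕ) (y : Fin m → EuclideanSpace ℝ (Fin N)) (hy : Function.Injective y)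
    (u : ℝ → EuclideanSpace ℝ (Fin N) → ℝ)
    (hu : ∀ t x, u t x = ∑ n : Fin m, t ^ (((N : ℝ) - 2) / 2) * v (t • (x - y n))) :
    (∀ p : ℝ, 2 < p → p < (2 * (N : ℝ)) / ((N : ℝ) - 2) →
      Tendsto (fun t => ∫ x, |u t x| ^ p) atTop (𝓝 0)) ∧
    (∃ C : ℝ, ∀ t : ℝ, 1 ≤ t → (∫ x, (‖gradient (u t) x‖ ^ 2 + (u t x) ^ 2)) ≤ C) ∧
    Tendsto (fun t => ∫ x, |u t x| ^ ((2 * (N : ℝ)) / ((N : ℝ) - 2))) atTop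
      (𝓝 ((m : ℝ) * ∫ x, |v x| ^ ((2 * (N : ℝ)) / ((N : ℝ) - 2)))) := by
  classical
  have hN2 : (0:ℝ) < (N:ℝ) - 2 := by
    have h3 : (3:ℝ) ≤ (N:ℝ) := by exact_mod_cast hN
    linarith
  set α : ℝ := ((N:ℝ) - 2) / 2 with hα
  obtain ⟨R, hR⟩ := (IsCompact.isBounded hvc).subset_closedBall 0
  -- eventual disjointness of the supports of the bubbles
  have hkey : ∀ᶠ t : ℝ in atTop, ∀ x, ∀ n n' : Fin m,
      v (t • (x - y n)) ≠ 0 → v (t • (x - y n')) ≠ 0 → n = n' := by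
    have hpair : ∀ᶠ t : ℝ in atTop, ∀ q ∈ (Finset.univ : Finset (Fin m)).offDiag,
        2 * R < t * ‖y q.1 - y q.2‖ := by
      rw [Filter.eventually_all_finset]
      intro q hq
      have hne : q.1 ≠ q.2 := (Finset.mem_offDiag.mp hq).2.2
      have hpos : 0 < ‖y q.1 - y q.2‖ := by
        rw [norm_pos_iff, sub_ne_zero]
        exact fun h => hne (hy h)
      exact (Filter.Tendsto.atTop_mul_const hpos tendsto_id).eventually_gt_atTop (2 * R)
    filter_upwards [hpair, eventually_gt_atTop (0:ℝ)] with t hp ht x n n' h1 h2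
    by_contra hnn
    have hq : (n, n') ∈ (Finset.univ : Finset (Fin m)).offDiag := by
      simp [Finset.mem_offDiag, hnn]
    have h2R := hp (n, n') hq
    have hb : ∀ k : Fin m, v (t • (x - y k)) ≠ 0 → t * ‖x - y k‖ ≤ R := by
      intro k hk
      have hmem : t • (x - y k) ∈ tsupport v := subset_tsupport v (Function.mem_support.mpr hk)
      have := hR hmem
      rw [Metric.mem_closedBall, dist_zero_right, norm_smul, Real.norm_eq_abs,
        abs_of_pos ht] at this
      exact this
    have hA := hb n h1
    have hB := hb n' h2
    have htri : ‖y n - y n'‖ ≤ ‖x - y n'‖ + ‖x - y n‖ := by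
      have hrw : y n - y n' = (x - y n') - (x - y n) := by abel
      rw [hrw]
      exact norm_sub_le _ _
    nlinarith [mul_le_mul_of_nonneg_left htri ht.le]
  -- the main eventual identity
  have hmain : ∀ p : ℝ, 0 < p → ∀ᶠ t : ℝ in atTop,
      (∫ x, |u t x| ^ p) = (m:ℝ) * (t ^ (α * p - (N:ℝ)) * ∫ x, |v x| ^ p) := by
    intro p hp
    filter_upwards [hkey, eventually_gt_atTop (0:ℝ)] with t hd ht
    have hpne : p ≠ 0 := hp.ne'
    have hint : ∀ n : Fin m, Integrable (fun x => |t ^ α * v (t • (x - y n))| ^ p) := by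
      intro n
      refine integrable_abs_rpow ?_ ?_ hp
      · exact continuous_const.mul (cont_comp hv.continuous t (y n))
      · exact (hcs_comp hvc ht (y n)).comp_left (g := fun a : ℝ => t ^ α * a) (mul_zero _)
    calc (∫ x, |u t x| ^ p)
        = ∫ x, ∑ n, |t ^ α * v (t • (x - y n))| ^ p := by
          refine integral_congr_ae (Eventually.of_forall fun x => ?_)
          show |u t x| ^ p = ∑ n : Fin m, |t ^ α * v (t • (x - y n))| ^ p
          rw [hu t x]
          exact abs_sum_rpow _ hpne fun n n' h1 h2 =>
            hd x n n' (fun h0 => h1 (by rw [h0, mul_zero])) (fun h0 => h2 (by rw [h0, mul_zero]))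
      _ = ∑ n, ∫ x, |t ^ α * v (t • (x - y n))| ^ p := integral_finset_sum _ (fun n _ => hint n)
      _ = ∑ _n : Fin m, t ^ (α * p - (N:ℝ)) * ∫ x, |v x| ^ p :=
          Finset.sum_congr rfl fun n _ => integral_bubble_rpow v ht (y n) α p
      _ = (m:ℝ) * (t ^ (α * p - (N:ℝ)) * ∫ x, |v x| ^ p) := by
          rw [Finset.sum_const, Finset.card_univ, Fintype.card_fin, nsmul_eq_mul]
  refine ⟨?_, ?_, ?_⟩
  · -- part (i)
    intro p hp2 hps
    have hp0 : (0:ℝ) < p := by linarith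
    have hlt : α * p - (N:ℝ) < 0 := by
      have h' := (lt_div_iff₀ hN2).mp hps
      rw [hα]
      nlinarith
    refine Tendsto.congr' (EventuallyEq.symm (hmain p hp0)) ?_
    have h1 : Tendsto (fun t : ℝ => t ^ (α * p - (N:ℝ))) atTop (𝓝 0) := by
      have h2 := tendsto_rpow_neg_atTop (y := (N:ℝ) - α * p) (by linarith)
      exact h2.congr fun x => by rw [neg_sub]
    have h3 := (h1.mul_const (∫ x, |v x| ^ p)).const_mul (m:ℝ)
    simpa using h3
  · -- part (ii)
    refine ⟨(m:ℝ) * ((m:ℝ) * ((∫ x, ‖gradient v x‖ ^ 2) + ∫ x, (v x) ^ 2)), ?_⟩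
    intro t ht1
    have ht : (0:ℝ) < t := by linarith
    have hc0 : 0 < t ^ α := Real.rpow_pos_of_pos ht α
    have hu' : u t = fun x => ∑ n : Fin m, t ^ α * v (t • (x - y n)) := funext (hu t)
    have hgu : ∀ x, gradient (u t) x
        = ∑ n : Fin m, (t ^ α * t) • gradient v (t • (x - y n)) := by
      intro x
      rw [hu']
      exact (hasGradientAt_sum Finset.univ _ _ x
        (fun n _ => hasGradientAt_bubble hv (t ^ α) t (y n) x)).gradient
    have hgvc : Continuous (gradient v) :=
      (LinearIsometryEquiv.continuous _).comp (hv.continuous_fderiv (by simp))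
    have hgvs : HasCompactSupport (gradient v) :=
      (hvc.fderiv (𝕜 := ℝ)).comp_left
        (g := ((InnerProductSpace.toDual ℝ (EuclideanSpace ℝ (Fin N))).symm :
          (EuclideanSpace ℝ (Fin N) →L[ℝ] ℝ) → EuclideanSpace ℝ (Fin N))) (map_zero _)
    have hint1 : ∀ n : Fin m,
        Integrable (fun x => ‖(t ^ α * t) • gradient v (t • (x - y n))‖ ^ 2) := by
      intro n
      have hcont : Continuous (fun x => ‖(t ^ α * t) • gradient v (t • (x - y n))‖ ^ 2) :=
        ((cont_comp hgvc t (y n)).const_smul (t ^ α * t)).norm.pow 2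
      have hcs : HasCompactSupport (fun x => ‖(t ^ α * t) • gradient v (t • (x - y n))‖ ^ 2) :=
        (hcs_comp hgvs ht (y n)).comp_left
          (g := fun w : EuclideanSpace ℝ (Fin N) => ‖(t ^ α * t) • w‖ ^ 2) (by simp)
      exact hcont.integrable_of_hasCompactSupport hcs
    have hint2 : ∀ n : Fin m, Integrable (fun x => (t ^ α * v (t • (x - y n))) ^ 2) := by
      intro n
      have hcont : Continuous fun x => (t ^ α * v (t • (x - y n))) ^ 2 :=
        (continuous_const.mul (cont_comp hv.continuous t (y n))).pow 2
      have hcs : HasCompactSupport (fun x => (t ^ α * v (t • (x - y n))) ^ 2) :=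
        (hcs_comp hvc ht (y n)).comp_left (g := fun a : ℝ => (t ^ α * a) ^ 2) (by simp)
      exact hcont.integrable_of_hasCompactSupport hcs
    have hct : (t ^ α * t) ^ 2 * t ^ (-(N:ℝ)) = 1 := by
      have e1 : (t ^ α * t) ^ 2 = t ^ (α * 2 + 2) := by
        rw [mul_pow, ← Real.rpow_natCast (t ^ α) 2, ← Real.rpow_natCast t 2,
          ← Real.rpow_mul ht.le, ← Real.rpow_add ht]
        norm_num
      rw [e1, ← Real.rpow_add ht]
      have e2 : α * 2 + 2 + -(N:ℝ) = 0 := by rw [hα]; ring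
      rw [e2, Real.rpow_zero]
    have hval1 : ∀ n : Fin m, (∫ x, ‖(t ^ α * t) • gradient v (t • (x - y n))‖ ^ 2)
        = ∫ x, ‖gradient v x‖ ^ 2 := by
      intro n
      have hpt : ∀ x : EuclideanSpace ℝ (Fin N),
          ‖(t ^ α * t) • gradient v (t • (x - y n))‖ ^ 2
          = (t ^ α * t) ^ 2 * ‖gradient v (t • (x - y n))‖ ^ 2 := by
        intro x
        rw [norm_smul, Real.norm_eq_abs, abs_of_pos (by positivity), mul_pow]
      simp_rw [hpt]
      rw [integral_const_mul,
        integral_smul_sub (fun z => ‖gradient v z‖ ^ 2) ht (y n), ← mul_assoc, hct, one_mul]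
    have hsq : ∀ a : ℝ, a ^ 2 = |a| ^ (2:ℝ) := by
      intro a
      rw [show ((2:ℝ) = ((2:ℕ):ℝ)) by norm_num, Real.rpow_natCast, sq_abs]
    have hval2 : ∀ n : Fin m,
        (∫ x, (t ^ α * v (t • (x - y n))) ^ 2) ≤ ∫ x, (v x) ^ 2 := by
      intro n
      have h1 : (∫ x, (t ^ α * v (t • (x - y n))) ^ 2)
          = ∫ x, |t ^ α * v (t • (x - y n))| ^ (2:ℝ) := by simp_rw [hsq]
      have h2 : (∫ x, (v x) ^ 2) = ∫ x, |v x| ^ (2:ℝ) := by simp_rw [hsq]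
      have hI : 0 ≤ ∫ x, |v x| ^ (2:ℝ) := integral_nonneg fun x => by positivity
      have hexp : α * 2 - (N:ℝ) = -2 := by rw [hα]; ring
      rw [h1, h2, integral_bubble_rpow v ht (y n) α 2, hexp]
      calc t ^ (-2:ℝ) * ∫ x, |v x| ^ (2:ℝ) ≤ 1 * ∫ x, |v x| ^ (2:ℝ) :=
            mul_le_mul_of_nonneg_right
              (Real.rpow_le_one_of_one_le_of_nonpos ht1 (by norm_num)) hI
        _ = _ := one_mul _
    have hmaj : ∀ x, ‖gradient (u t) x‖ ^ 2 + (u t x) ^ 2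
        ≤ (m:ℝ) * ∑ n : Fin m, (‖(t ^ α * t) • gradient v (t • (x - y n))‖ ^ 2
            + (t ^ α * v (t • (x - y n))) ^ 2) := by
      intro x
      have e1 : ‖gradient (u t) x‖ ^ 2
          ≤ (m:ℝ) * ∑ n : Fin m, ‖(t ^ α * t) • gradient v (t • (x - y n))‖ ^ 2 := by
        rw [hgu x]
        calc ‖∑ n : Fin m, (t ^ α * t) • gradient v (t • (x - y n))‖ ^ 2
            ≤ (∑ n : Fin m, ‖(t ^ α * t) • gradient v (t • (x - y n))‖) ^ 2 :=
              pow_le_pow_left₀ (norm_nonneg _) (norm_sum_le _ _) 2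
          _ ≤ (m:ℝ) * ∑ n : Fin m, ‖(t ^ α * t) • gradient v (t • (x - y n))‖ ^ 2 := by
              simpa using sq_sum_le_card_mul_sum_sq (s := (Finset.univ : Finset (Fin m)))
                (f := fun n => ‖(t ^ α * t) • gradient v (t • (x - y n))‖)
      have e2 : (u t x) ^ 2 ≤ (m:ℝ) * ∑ n : Fin m, (t ^ α * v (t • (x - y n))) ^ 2 := by
        rw [hu t x]
        simpa using sq_sum_le_card_mul_sum_sq (s := (Finset.univ : Finset (Fin m)))
          (f := fun n => t ^ α * v (t • (x - y n)))
      calc ‖gradient (u t) x‖ ^ 2 + (u t x) ^ 2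
          ≤ (m:ℝ) * (∑ n : Fin m, ‖(t ^ α * t) • gradient v (t • (x - y n))‖ ^ 2)
            + (m:ℝ) * ∑ n : Fin m, (t ^ α * v (t • (x - y n))) ^ 2 := add_le_add e1 e2
        _ = _ := by rw [← mul_add, ← Finset.sum_add_distrib]
    have hint12 : ∀ n : Fin m, Integrable (fun x =>
        ‖(t ^ α * t) • gradient v (t • (x - y n))‖ ^ 2
          + (t ^ α * v (t • (x - y n))) ^ 2) := fun n => (hint1 n).add (hint2 n)
    have hintmaj : Integrable (fun x => (m:ℝ) * ∑ n : Fin m,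
        (‖(t ^ α * t) • gradient v (t • (x - y n))‖ ^ 2
          + (t ^ α * v (t • (x - y n))) ^ 2)) := by
      refine Integrable.const_mul ?_ _
      exact integrable_finset_sum _ fun n _ => (hint1 n).add (hint2 n)
    calc (∫ x, (‖gradient (u t) x‖ ^ 2 + (u t x) ^ 2))
        ≤ ∫ x, (m:ℝ) * ∑ n : Fin m, (‖(t ^ α * t) • gradient v (t • (x - y n))‖ ^ 2
            + (t ^ α * v (t • (x - y n))) ^ 2) :=
          integral_mono_of_nonneg (Eventually.of_forall fun x => by positivity) hintmaj
            (Eventually.of_forall hmaj)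
      _ = (m:ℝ) * ∑ n : Fin m, ((∫ x, ‖(t ^ α * t) • gradient v (t • (x - y n))‖ ^ 2)
            + ∫ x, (t ^ α * v (t • (x - y n))) ^ 2) := by
          rw [integral_const_mul]
          congr 1
          rw [integral_finset_sum _ fun n _ => hint12 n]
          exact Finset.sum_congr rfl fun n _ => integral_add (hint1 n) (hint2 n)
      _ ≤ (m:ℝ) * ∑ _n : Fin m, ((∫ x, ‖gradient v x‖ ^ 2) + ∫ x, (v x) ^ 2) := by
          refine mul_le_mul_of_nonneg_left ?_ (by positivity)
          exact Finset.sum_le_sum fun n _ => add_le_add (le_of_eq (hval1 n)) (hval2 n)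
      _ = (m:ℝ) * ((m:ℝ) * ((∫ x, ‖gradient v x‖ ^ 2) + ∫ x, (v x) ^ 2)) := by
          rw [Finset.sum_const, Finset.card_univ, Fintype.card_fin, nsmul_eq_mul]
  · -- part (iii)
    have hp0 : (0:ℝ) < (2 * (N:ℝ)) / ((N:ℝ) - 2) := by
      apply div_pos _ hN2
      linarith
    have hexp : α * ((2 * (N:ℝ)) / ((N:ℝ) - 2)) - (N:ℝ) = 0 := by
      rw [hα]
      field_simp
      ring
    have heq : ∀ᶠ t : ℝ in atTop,
        (∫ x, |u t x| ^ ((2 * (N:ℝ)) / ((N:ℝ) - 2)))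
          = (m:ℝ) * ∫ x, |v x| ^ ((2 * (N:ℝ)) / ((N:ℝ) - 2)) := by
      filter_upwards [hmain _ hp0] with t h
      rw [h, hexp, Real.rpow_zero, one_mul]
    exact Tendsto.congr' (EventuallyEq.symm heq) tendsto_const_nhds
end
end

section
/- Let N ≥ 3. Let (j_k), (ℓ_k) be sequences in ℕ with j_k → ∞ and ℓ_k → ∞, and let (y_k), (z_k) be sequences in ℝ^N such that |ℓ_k − j_k| + (2^{ℓ_k} + 2^{j_k})|y_k − z_k| → ∞ as k → ∞. Then for every v, w ∈ C_c^∞(ℝ^N), the bubbles V_k(x) = 2^{j_k(N−2)/2} χ(x − y_k) v(2^{j_k}(x − y_k)) and W_k(x) = 2^{ℓ_k(N−2)/2} χ(x − z_k) w(2^{ℓ_k}(x − z_k)) satisfy (V_k, W_k)_{H¹} = ∫_{ℝ^N}(∇V_k·∇W_k + V_k W_k) dx → 0 as k → ∞. -/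
open MeasureTheory Filter Topology
open scoped RealInnerProductSpace

noncomputable section
set_option maxHeartbeats 1000000
open InnerProductSpace

lemma aux_grad {N : ℕ} {f : EuclideanSpace ℝ (Fin N) → ℝ} (hf : ContDiff ℝ (⊤ : ℕ∞) f)
    (c b : ℝ) (z x : EuclideanSpace ℝ (Fin N)) :
    HasGradientAt (fun x => c * f (b • (x - z))) ((c * b) • gradient f (b • (x - z))) x := by
  have hdf : DifferentiableAt ℝ f (b • (x - z)) := (hf.differentiable (by simp)).differentiableAt
  have h1 : HasFDerivAt f (fderiv ℝ f (b • (x - z))) (b • (x - z)) := hdf.hasFDerivAt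
  have h2 : HasFDerivAt (fun x : EuclideanSpace ℝ (Fin N) => b • (x - z))
      (b • ContinuousLinearMap.id ℝ (EuclideanSpace ℝ (Fin N))) x :=
    ((hasFDerivAt_id x).sub_const z).const_smul b
  have h3 := (h1.comp x h2).const_mul c
  have heq : c • ((fderiv ℝ f (b • (x - z))).comp
      (b • ContinuousLinearMap.id ℝ (EuclideanSpace ℝ (Fin N))))
      = toDual ℝ _ ((c * b) • gradient f (b • (x - z))) := by
    ext h
    simp only [ContinuousLinearMap.smul_apply, ContinuousLinearMap.coe_comp', Function.comp_apply,
      ContinuousLinearMap.coe_smul', Pi.smul_apply, ContinuousLinearMap.coe_id', id_eq,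
      toDual_apply_apply, ContinuousLinearMap.map_smul]
    rw [gradient, real_inner_smul_left, toDual_symm_apply]
    simp only [smul_eq_mul]
    ring
  rw [hasGradientAt_iff_hasFDerivAt, ← heq]
  exact h3

lemma aux_grad_eq {N : ℕ} {f : EuclideanSpace ℝ (Fin N) → ℝ} (hf : ContDiff ℝ (⊤ : ℕ∞) f)
    (c b : ℝ) (z x : EuclideanSpace ℝ (Fin N)) :
    gradient (fun x => c * f (b • (x - z))) x = (c * b) • gradient f (b • (x - z)) :=
  (aux_grad hf c b z x).gradient

lemma aux_grad_zero {N : ℕ} {f : EuclideanSpace ℝ (Fin N) → ℝ} {x : EuclideanSpace ℝ (Fin N)}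
    (hx : x ∉ tsupport f) : gradient f x = 0 := by
  have : fderiv ℝ f x = 0 := by
    by_contra h
    exact hx (support_fderiv_subset ℝ (Function.mem_support.2 h))
  rw [gradient, this, map_zero]

lemma aux_grad_cont {N : ℕ} {f : EuclideanSpace ℝ (Fin N) → ℝ} (hf : ContDiff ℝ (⊤ : ℕ∞) f) :
    Continuous (gradient f) := by
  have : Continuous (fderiv ℝ f) := hf.continuous_fderiv (by simp)
  exact ((toDual ℝ (EuclideanSpace ℝ (Fin N))).symm.continuous).comp this

lemma aux_grad_cs {N : ℕ} {f : EuclideanSpace ℝ (Fin N) → ℝ} (hfc : HasCompactSupport f) :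
    HasCompactSupport (gradient f) := by
  apply HasCompactSupport.of_support_subset_isCompact hfc
  intro x hx
  contrapose! hx
  simp [Function.mem_support, aux_grad_zero hx]

lemma aux_int_scale {N : ℕ} (f : EuclideanSpace ℝ (Fin N) → ℝ) (b : ℝ)
    (z : EuclideanSpace ℝ (Fin N)) :
    ∫ x, f (b • (x - z)) = |(b ^ N)⁻¹| * ∫ x, f x := by
  have h1 : ∫ x, f (b • (x - z)) = ∫ x, (fun u => f (b • u)) (x - z) := rfl
  rw [h1, integral_sub_right_eq_self (fun u => f (b • u)) z,
    MeasureTheory.Measure.integral_comp_smul volume f b]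
  simp [finrank_euclideanSpace_fin, smul_eq_mul]

lemma aux_comp_cs {N : ℕ} {f : EuclideanSpace ℝ (Fin N) → ℝ} (hfc : HasCompactSupport f)
    {b : ℝ} (hb : b ≠ 0) (z : EuclideanSpace ℝ (Fin N)) :
    HasCompactSupport (fun x => f (b • (x - z))) := by
  have : (fun x : EuclideanSpace ℝ (Fin N) => f (b • (x - z)))
      = f ∘ ((Homeomorph.subRight z).trans (Homeomorph.smulOfNeZero b hb)) := rfl
  rw [this]
  exact hfc.comp_homeomorph _

lemma aux_core {N : ℕ} (hN : 3 ≤ N) (v w : EuclideanSpace ℝ (Fin N) → ℝ)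
    (hv : ContDiff ℝ (⊤ : ℕ∞) v) (hvc : HasCompactSupport v)
    (hw : ContDiff ℝ (⊤ : ℕ∞) w) (hwc : HasCompactSupport w) :
    ∃ K : ℝ, 0 ≤ K ∧ ∀ (a b : ℕ), a ≤ b → ∀ (y z : EuclideanSpace ℝ (Fin N)),
      |∫ x, (⟪gradient (fun x => (2:ℝ) ^ ((a:ℝ) * (((N:ℝ) - 2) / 2)) * v ((2:ℝ) ^ a • (x - y))) x,
             gradient (fun x => (2:ℝ) ^ ((b:ℝ) * (((N:ℝ) - 2) / 2)) * w ((2:ℝ) ^ b • (x - z))) x⟫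
        + ((2:ℝ) ^ ((a:ℝ) * (((N:ℝ) - 2) / 2)) * v ((2:ℝ) ^ a • (x - y))) *
          ((2:ℝ) ^ ((b:ℝ) * (((N:ℝ) - 2) / 2)) * w ((2:ℝ) ^ b • (x - z))))|
      ≤ K * (2:ℝ) ^ (-(((b:ℝ) - (a:ℝ)) / 2)) := by
  obtain ⟨Cgv0, hCgv0⟩ := (aux_grad_cont hv).norm.bounded_above_of_compact_support
      ((aux_grad_cs hvc).norm)
  obtain ⟨Cv0, hCv0⟩ := hv.continuous.norm.bounded_above_of_compact_support hvc.norm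
  set Cgv := max Cgv0 0 with hCgvdef
  set Cv := max Cv0 0 with hCvdef
  have hCgv : ∀ x, ‖gradient v x‖ ≤ Cgv := fun x => le_trans (by
    simpa using hCgv0 x) (le_max_left _ _)
  have hCv : ∀ x, |v x| ≤ Cv := fun x => le_trans (by simpa using hCv0 x) (le_max_left _ _)
  have hCgvn : 0 ≤ Cgv := le_max_right _ _
  have hCvn : 0 ≤ Cv := le_max_right _ _
  set Igw := ∫ x, ‖gradient w x‖ with hIgwdef
  set Iw := ∫ x, |w x| with hIwdef
  have hIgwn : 0 ≤ Igw := integral_nonneg fun x => norm_nonneg _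
  have hIwn : 0 ≤ Iw := integral_nonneg fun x => abs_nonneg _
  refine ⟨Cgv * Igw + Cv * Iw, by positivity, fun a b hab y z => ?_⟩
  set ca := (2:ℝ) ^ ((a:ℝ) * (((N:ℝ) - 2) / 2)) with hcadef
  set cb := (2:ℝ) ^ ((b:ℝ) * (((N:ℝ) - 2) / 2)) with hcbdef
  set sa := (2:ℝ) ^ a with hsadef
  set sb := (2:ℝ) ^ b with hsbdef
  have hsa : (0:ℝ) < sa := by positivity
  have hsb : (0:ℝ) < sb := by positivity
  have hca : (0:ℝ) < ca := by positivity
  have hcb : (0:ℝ) < cb := by positivity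
  set G := fun x : EuclideanSpace ℝ (Fin N) => ‖gradient w (sb • (x - z))‖ with hGdef
  set Wa := fun x : EuclideanSpace ℝ (Fin N) => |w (sb • (x - z))| with hWadef
  have hGc : Continuous G :=
    (aux_grad_cont hw).norm.comp ((continuous_id.sub continuous_const).const_smul sb)
  have hWac : Continuous Wa :=
    hw.continuous.abs.comp ((continuous_id.sub continuous_const).const_smul sb)
  have hGcs : HasCompactSupport G :=
    aux_comp_cs ((aux_grad_cs hwc).norm) (ne_of_gt hsb) z
  have hWacs : HasCompactSupport Wa := by
    have h0 : HasCompactSupport (fun x : EuclideanSpace ℝ (Fin N) => |w x|) := hwc.norm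
    exact aux_comp_cs h0 (ne_of_gt hsb) z
  have hGint : Integrable G := hGc.integrable_of_hasCompactSupport hGcs
  have hWaint : Integrable Wa := hWac.integrable_of_hasCompactSupport hWacs
  set c1 := ca * sa * Cgv * (cb * sb) with hc1def
  set c2 := ca * Cv * cb with hc2def
  have hc1n : 0 ≤ c1 := by positivity
  have hc2n : 0 ≤ c2 := by positivity
  set h := fun x => c1 * G x + c2 * Wa x with hhdef
  have hhint : Integrable h := (hGint.const_mul c1).add (hWaint.const_mul c2)
  set Φ := fun x : EuclideanSpace ℝ (Fin N) =>
    (⟪gradient (fun x => ca * v (sa • (x - y))) x, gradient (fun x => cb * w (sb • (x - z))) x⟫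
      + (ca * v (sa • (x - y))) * (cb * w (sb • (x - z)))) with hΦdef
  have hpt : ∀ x, |Φ x| ≤ h x := by
    intro x
    simp only [hΦdef]
    rw [aux_grad_eq hv ca sa y x, aux_grad_eq hw cb sb z x]
    have e1 : ‖(ca * sa) • gradient v (sa • (x - y))‖ ≤ ca * sa * Cgv := by
      rw [norm_smul, Real.norm_eq_abs, abs_of_pos (by positivity : (0:ℝ) < ca * sa)]
      exact mul_le_mul_of_nonneg_left (hCgv _) (by positivity)
    have e2 : ‖(cb * sb) • gradient w (sb • (x - z))‖ = cb * sb * G x := by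
      rw [norm_smul, Real.norm_eq_abs, abs_of_pos (by positivity : (0:ℝ) < cb * sb)]
    calc |(⟪(ca * sa) • gradient v (sa • (x - y)), (cb * sb) • gradient w (sb • (x - z))⟫
          + (ca * v (sa • (x - y))) * (cb * w (sb • (x - z))))|
        ≤ |⟪(ca * sa) • gradient v (sa • (x - y)), (cb * sb) • gradient w (sb • (x - z))⟫|
          + |(ca * v (sa • (x - y))) * (cb * w (sb • (x - z)))| := abs_add_le _ _
      _ ≤ ‖(ca * sa) • gradient v (sa • (x - y))‖ * ‖(cb * sb) • gradient w (sb • (x - z))‖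
          + (ca * |v (sa • (x - y))|) * (cb * Wa x) := by
          apply add_le_add (abs_real_inner_le_norm _ _)
          rw [abs_mul, abs_mul, abs_mul, abs_of_pos hca, abs_of_pos hcb]
      _ ≤ (ca * sa * Cgv) * (cb * sb * G x) + (ca * Cv) * (cb * Wa x) := by
          rw [e2]
          apply add_le_add
          · exact mul_le_mul_of_nonneg_right e1 (by positivity)
          · exact mul_le_mul_of_nonneg_right
              (mul_le_mul_of_nonneg_left (hCv _) hca.le) (by positivity)
      _ = h x := by simp only [hhdef, hc1def, hc2def]; ring
  have habs : |∫ x, Φ x| ≤ ∫ x, h x := by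
    have h0 : |∫ x, Φ x| ≤ ∫ x, |Φ x| := by
      simpa [Real.norm_eq_abs] using norm_integral_le_integral_norm (μ := volume) Φ
    exact h0.trans (integral_mono_of_nonneg (Filter.Eventually.of_forall fun x => abs_nonneg _)
      hhint (Filter.Eventually.of_forall hpt))
  have hIh : ∫ x, h x = c1 * (|((sb:ℝ) ^ N)⁻¹| * Igw) + c2 * (|((sb:ℝ) ^ N)⁻¹| * Iw) := by
    simp only [hhdef]
    rw [integral_add (hGint.const_mul c1) (hWaint.const_mul c2),
      integral_const_mul, integral_const_mul]
    congr 1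
    · congr 1
      exact aux_int_scale (fun u => ‖gradient w u‖) sb z
    · congr 1
      exact aux_int_scale (fun u => |w u|) sb z
  have habs2 : |(sb ^ N : ℝ)⁻¹| = (2:ℝ) ^ (-((b:ℝ) * N)) := by
    rw [abs_of_pos (by positivity : (0:ℝ) < (sb ^ N)⁻¹), hsbdef, ← pow_mul,
      ← Real.rpow_natCast (2:ℝ) (b * N), ← Real.rpow_neg (by norm_num : (0:ℝ) ≤ 2)]
    push_cast
    ring_nf
  have hexp1 : ca * sa * (cb * sb) * (2:ℝ) ^ (-((b:ℝ) * N)) ≤ (2:ℝ) ^ (-(((b:ℝ) - a) / 2)) := by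
    rw [hcadef, hcbdef, hsadef, hsbdef, ← Real.rpow_natCast (2:ℝ) a, ← Real.rpow_natCast (2:ℝ) b,
      ← Real.rpow_add (by norm_num : (0:ℝ) < 2), ← Real.rpow_add (by norm_num : (0:ℝ) < 2),
      ← Real.rpow_add (by norm_num : (0:ℝ) < 2), ← Real.rpow_add (by norm_num : (0:ℝ) < 2)]
    apply Real.rpow_le_rpow_of_exponent_le (by norm_num)
    have hab' : (a:ℝ) ≤ b := by exact_mod_cast hab
    have hN' : (3:ℝ) ≤ N := by exact_mod_cast hN
    nlinarith [mul_nonneg (sub_nonneg.2 hab') (sub_nonneg.2 (by linarith : (1:ℝ) ≤ N))]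
  have hexp2 : ca * cb * (2:ℝ) ^ (-((b:ℝ) * N)) ≤ (2:ℝ) ^ (-(((b:ℝ) - a) / 2)) := by
    rw [hcadef, hcbdef, ← Real.rpow_add (by norm_num : (0:ℝ) < 2),
      ← Real.rpow_add (by norm_num : (0:ℝ) < 2)]
    apply Real.rpow_le_rpow_of_exponent_le (by norm_num)
    have hab' : (a:ℝ) ≤ b := by exact_mod_cast hab
    have hN' : (3:ℝ) ≤ N := by exact_mod_cast hN
    have ha0 : (0:ℝ) ≤ a := Nat.cast_nonneg a
    nlinarith [mul_nonneg (sub_nonneg.2 hab') (sub_nonneg.2 (by linarith : (3:ℝ) ≤ N))]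
  refine habs.trans ?_
  rw [hIh, habs2]
  calc c1 * ((2:ℝ) ^ (-((b:ℝ) * N)) * Igw) + c2 * ((2:ℝ) ^ (-((b:ℝ) * N)) * Iw)
      = (Cgv * Igw) * (ca * sa * (cb * sb) * (2:ℝ) ^ (-((b:ℝ) * N)))
        + (Cv * Iw) * (ca * cb * (2:ℝ) ^ (-((b:ℝ) * N))) := by
        rw [hc1def, hc2def]; ring
    _ ≤ (Cgv * Igw) * (2:ℝ) ^ (-(((b:ℝ) - a) / 2))
        + (Cv * Iw) * (2:ℝ) ^ (-(((b:ℝ) - a) / 2)) :=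
        add_le_add (mul_le_mul_of_nonneg_left hexp1 (by positivity))
          (mul_le_mul_of_nonneg_left hexp2 (by positivity))
    _ = (Cgv * Igw + Cv * Iw) * (2:ℝ) ^ (-(((b:ℝ) - a) / 2)) := by ring

lemma aux_zero {N : ℕ} {v w : EuclideanSpace ℝ (Fin N) → ℝ}
    (hv : ContDiff ℝ (⊤ : ℕ∞) v) (hw : ContDiff ℝ (⊤ : ℕ∞) w) {R : ℝ}
    (hvs : tsupport v ⊆ Metric.closedBall 0 R) (hws : tsupport w ⊆ Metric.closedBall 0 R)
    (cva cwb : ℝ) (a b : ℕ) (y z : EuclideanSpace ℝ (Fin N))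
    (hyz : R / (2:ℝ) ^ a + R / (2:ℝ) ^ b < ‖y - z‖) (x : EuclideanSpace ℝ (Fin N)) :
    ⟪gradient (fun x => cva * v ((2:ℝ) ^ a • (x - y))) x,
      gradient (fun x => cwb * w ((2:ℝ) ^ b • (x - z))) x⟫
      + (cva * v ((2:ℝ) ^ a • (x - y))) * (cwb * w ((2:ℝ) ^ b • (x - z))) = 0 := by
  have hsa : (0:ℝ) < 2 ^ a := by positivity
  have hsb : (0:ℝ) < 2 ^ b := by positivity
  have hcase : R / 2 ^ a < ‖x - y‖ ∨ R / 2 ^ b < ‖x - z‖ := by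
    by_contra hcon
    push_neg at hcon
    have htri : ‖y - z‖ ≤ ‖x - y‖ + ‖x - z‖ := by
      have := dist_triangle y x z
      simpa [dist_eq_norm, norm_sub_rev y x] using this
    linarith [hcon.1, hcon.2]
  rcases hcase with hc | hc
  · have hu : (2:ℝ) ^ a • (x - y) ∉ tsupport v := by
      intro hmem
      have hle : ‖(2:ℝ) ^ a • (x - y)‖ ≤ R := by
        simpa [mem_closedBall_zero_iff] using hvs hmem
      rw [norm_smul, Real.norm_eq_abs, abs_of_pos hsa] at hle
      have hlt : R < ‖x - y‖ * 2 ^ a := (div_lt_iff₀ hsa).1 hc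
      nlinarith
    have h1 : v ((2:ℝ) ^ a • (x - y)) = 0 := image_eq_zero_of_notMem_tsupport hu
    have h2 : gradient (fun x => cva * v ((2:ℝ) ^ a • (x - y))) x = 0 := by
      rw [aux_grad_eq hv cva ((2:ℝ) ^ a) y x, aux_grad_zero hu, smul_zero]
    rw [h1, h2]
    simp
  · have hu : (2:ℝ) ^ b • (x - z) ∉ tsupport w := by
      intro hmem
      have hle : ‖(2:ℝ) ^ b • (x - z)‖ ≤ R := by
        simpa [mem_closedBall_zero_iff] using hws hmem
      rw [norm_smul, Real.norm_eq_abs, abs_of_pos hsb] at hle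
      have hlt : R < ‖x - z‖ * 2 ^ b := (div_lt_iff₀ hsb).1 hc
      nlinarith
    have h1 : w ((2:ℝ) ^ b • (x - z)) = 0 := image_eq_zero_of_notMem_tsupport hu
    have h2 : gradient (fun x => cwb * w ((2:ℝ) ^ b • (x - z))) x = 0 := by
      rw [aux_grad_eq hw cwb ((2:ℝ) ^ b) z x, aux_grad_zero hu, smul_zero]
    rw [h1, h2]
    simp


/-- asymptotic orthogonality (sufficiency part of Lemma 3.2) in ℝ^N:
asymptotically decoupled bubbles are asymptotically orthogonal in H¹. -/
theorem struwe_solimini_stmt4 (N : ℕ) (hN : 3 ≤ N) (r : ℝ) (hr : 0 < r)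
    (χ : EuclideanSpace ℝ (Fin N) → ℝ) (hχsm : ContDiff ℝ (⊤ : ℕ∞) χ) (hχc : HasCompactSupport χ)
    (hχ01 : ∀ x, 0 ≤ χ x ∧ χ x ≤ 1)
    (hχ1 : ∀ x : EuclideanSpace ℝ (Fin N), ‖x‖ ≤ r / 2 → χ x = 1)
    (hχ0 : ∀ x : EuclideanSpace ℝ (Fin N), r ≤ ‖x‖ → χ x = 0)
    (j ℓ : ℕ → ℕ) (hj : Tendsto j atTop atTop) (hℓ : Tendsto ℓ atTop atTop)
    (y z : ℕ → EuclideanSpace ℝ (Fin N))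
    (hdec : Tendsto (fun k =>
        |(ℓ k : ℝ) - (j k : ℝ)| + ((2 : ℝ) ^ (ℓ k) + (2 : ℝ) ^ (j k)) * ‖y k - z k‖)
      atTop atTop)
    (v w : EuclideanSpace ℝ (Fin N) → ℝ)
    (hv : ContDiff ℝ (⊤ : ℕ∞) v) (hvc : HasCompactSupport v)
    (hw : ContDiff ℝ (⊤ : ℕ∞) w) (hwc : HasCompactSupport w)
    (V W : ℕ → EuclideanSpace ℝ (Fin N) → ℝ)
    (hV : ∀ k x, V k x = (2 : ℝ) ^ ((j k : ℝ) * (((N : ℝ) - 2) / 2)) * χ (x - y k) *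
        v ((2 : ℝ) ^ (j k) • (x - y k)))
    (hW : ∀ k x, W k x = (2 : ℝ) ^ ((ℓ k : ℝ) * (((N : ℝ) - 2) / 2)) * χ (x - z k) *
        w ((2 : ℝ) ^ (ℓ k) • (x - z k))) :
    Tendsto (fun k => ∫ x, (⟪gradient (V k) x, gradient (W k) x⟫ + V k x * W k x))
      atTop (𝓝 0) := by
  -- a common radius for the supports
  obtain ⟨Rv, hRv⟩ := hvc.isBounded.subset_closedBall 0
  obtain ⟨Rw, hRw⟩ := hwc.isBounded.subset_closedBall 0
  set R := max 1 (max Rv Rw) with hRdef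
  have hR : (0:ℝ) < R := lt_of_lt_of_le one_pos (le_max_left _ _)
  have hvs : tsupport v ⊆ Metric.closedBall 0 R :=
    hRv.trans (Metric.closedBall_subset_closedBall ((le_max_left _ _).trans (le_max_right _ _)))
  have hws : tsupport w ⊆ Metric.closedBall 0 R :=
    hRw.trans (Metric.closedBall_subset_closedBall ((le_max_right _ _).trans (le_max_right _ _)))
  obtain ⟨K1, hK1n, hK1⟩ := aux_core hN v w hv hvc hw hwc
  obtain ⟨K2, hK2n, hK2⟩ := aux_core hN w v hw hwc hv hvc
  set K := K1 + K2 with hKdef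
  have hKn : 0 ≤ K := by positivity
  set I : ℕ → ℝ := fun k =>
    ∫ x, (⟪gradient (fun x => (2:ℝ) ^ ((j k : ℝ) * (((N:ℝ) - 2) / 2)) *
            v ((2:ℝ) ^ (j k) • (x - y k))) x,
          gradient (fun x => (2:ℝ) ^ ((ℓ k : ℝ) * (((N:ℝ) - 2) / 2)) *
            w ((2:ℝ) ^ (ℓ k) • (x - z k))) x⟫
      + ((2:ℝ) ^ ((j k : ℝ) * (((N:ℝ) - 2) / 2)) * v ((2:ℝ) ^ (j k) • (x - y k))) *
        ((2:ℝ) ^ ((ℓ k : ℝ) * (((N:ℝ) - 2) / 2)) * w ((2:ℝ) ^ (ℓ k) • (x - z k)))) with hI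
  -- remove the cutoff eventually
  obtain ⟨n₀, hn₀⟩ := pow_unbounded_of_one_lt (2 * R / r) (by norm_num : (1:ℝ) < 2)
  have hcut : ∀ (m : ℕ) (c : EuclideanSpace ℝ (Fin N)) (f : EuclideanSpace ℝ (Fin N) → ℝ),
      tsupport f ⊆ Metric.closedBall 0 R → n₀ ≤ m →
      ∀ x, χ (x - c) * f ((2:ℝ) ^ m • (x - c)) = f ((2:ℝ) ^ m • (x - c)) := by
    intro m c f hfs hm x
    rcases eq_or_ne (f ((2:ℝ) ^ m • (x - c))) 0 with h0 | h0
    · rw [h0, mul_zero]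
    · have hmem : (2:ℝ) ^ m • (x - c) ∈ tsupport f :=
        subset_closure (Function.mem_support.2 h0)
      have hnorm : ‖(2:ℝ) ^ m • (x - c)‖ ≤ R := by
        simpa [mem_closedBall_zero_iff] using hfs hmem
      have hsk : (0:ℝ) < (2:ℝ) ^ m := by positivity
      have hsk2 : 2 * R / r ≤ (2:ℝ) ^ m :=
        le_trans hn₀.le (pow_le_pow_right₀ (by norm_num) hm)
      have h2Rr : (0:ℝ) < 2 * R / r := by positivity
      have hxy : ‖x - c‖ ≤ r / 2 := by
        rw [norm_smul, Real.norm_eq_abs, abs_of_pos hsk] at hnorm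
        calc ‖x - c‖ ≤ R / (2:ℝ) ^ m := by
              rw [le_div_iff₀ hsk]; linarith [hnorm]
          _ ≤ R / (2 * R / r) := div_le_div_of_nonneg_left hR.le h2Rr hsk2
          _ = r / 2 := by field_simp
      rw [hχ1 _ hxy, one_mul]
  have hVev : ∀ᶠ k in atTop, V k = fun x =>
      (2:ℝ) ^ ((j k : ℝ) * (((N:ℝ) - 2) / 2)) * v ((2:ℝ) ^ (j k) • (x - y k)) := by
    filter_upwards [hj.eventually_ge_atTop n₀] with k hkn
    funext x
    rw [hV k x, mul_assoc, hcut (j k) (y k) v hvs hkn x]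
  have hWev : ∀ᶠ k in atTop, W k = fun x =>
      (2:ℝ) ^ ((ℓ k : ℝ) * (((N:ℝ) - 2) / 2)) * w ((2:ℝ) ^ (ℓ k) • (x - z k)) := by
    filter_upwards [hℓ.eventually_ge_atTop n₀] with k hkn
    funext x
    rw [hW k x, mul_assoc, hcut (ℓ k) (z k) w hws hkn x]
  -- main convergence for the pure bubbles
  have hmain : Tendsto I atTop (𝓝 0) := by
    rw [NormedAddCommGroup.tendsto_nhds_zero]
    intro ε hε
    -- choose C
    have htend : Tendsto (fun n : ℕ => K * ((2:ℝ) ^ (-(1/2 : ℝ))) ^ n) atTop (𝓝 0) := by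
      have h1 : ((2:ℝ) ^ (-(1/2 : ℝ))) < 1 :=
        Real.rpow_lt_one_of_one_lt_of_neg (by norm_num) (by norm_num)
      have h0 : (0:ℝ) ≤ ((2:ℝ) ^ (-(1/2 : ℝ))) := by positivity
      have := (tendsto_pow_atTop_nhds_zero_of_lt_one h0 h1).const_mul K
      simpa using this
    obtain ⟨C, hC0⟩ := (htend.eventually_lt_const hε).exists
    have hpow : ((2:ℝ) ^ (-(1/2 : ℝ))) ^ C = (2:ℝ) ^ (-((C:ℝ) / 2)) := by
      rw [← Real.rpow_natCast ((2:ℝ) ^ (-(1/2 : ℝ))) C,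
        ← Real.rpow_mul (by norm_num : (0:ℝ) ≤ 2)]
      congr 1
      ring
    have hC : K * (2:ℝ) ^ (-((C:ℝ) / 2)) < ε := by rw [← hpow]; exact hC0
    set M := (C:ℝ) + R * (2 + (2:ℝ) ^ (C + 1)) + 1 with hMdef
    filter_upwards [hdec.eventually_ge_atTop M] with k hk
    rw [Real.norm_eq_abs]
    rcases lt_or_ge (|(ℓ k : ℝ) - (j k : ℝ)|) C with hsmall | hbig
    · -- disjoint supports: the integrand vanishes
      set A := (2:ℝ) ^ (j k) with hA
      set B := (2:ℝ) ^ (ℓ k) with hB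
      have hApos : (0:ℝ) < A := by positivity
      have hBpos : (0:ℝ) < B := by positivity
      have hBA : B / A ≤ (2:ℝ) ^ C := by
        rcases le_total (ℓ k) (j k) with hc | hc
        · have h1 : B ≤ A := pow_le_pow_right₀ (by norm_num) hc
          exact le_trans (div_le_one_of_le₀ h1 hApos.le) ((by simpa using pow_le_pow_right₀ (by norm_num : (1:ℝ) ≤ 2) (Nat.zero_le C)))
        · have hnat : ℓ k - j k ≤ C := by
            have h1 : ((ℓ k : ℝ) - j k) < C := lt_of_le_of_lt (le_abs_self _) hsmall
            have h2 : ((ℓ k - j k : ℕ) : ℝ) < C := by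
              rw [Nat.cast_sub hc]; exact h1
            exact_mod_cast h2.le
          have h1 : B = A * (2:ℝ) ^ (ℓ k - j k) := by
            rw [hA, hB, ← pow_add]; congr 1; omega
          rw [h1, mul_comm, mul_div_assoc, div_self (ne_of_gt hApos), mul_one]
          exact pow_le_pow_right₀ (by norm_num) hnat
      have hAB : A / B ≤ (2:ℝ) ^ C := by
        rcases le_total (j k) (ℓ k) with hc | hc
        · have h1 : A ≤ B := pow_le_pow_right₀ (by norm_num) hc
          exact le_trans (div_le_one_of_le₀ h1 hBpos.le) ((by simpa using pow_le_pow_right₀ (by norm_num : (1:ℝ) ≤ 2) (Nat.zero_le C)))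
        · have hnat : j k - ℓ k ≤ C := by
            have h1 : ((j k : ℝ) - ℓ k) < C := by
              have h2 := le_abs_self ((j k : ℝ) - ℓ k)
              rw [abs_sub_comm] at h2
              linarith
            have h2 : ((j k - ℓ k : ℕ) : ℝ) < C := by
              rw [Nat.cast_sub hc]; exact h1
            exact_mod_cast h2.le
          have h1 : A = B * (2:ℝ) ^ (j k - ℓ k) := by
            rw [hA, hB, ← pow_add]; congr 1; omega
          rw [h1, mul_comm, mul_div_assoc, div_self (ne_of_gt hBpos), mul_one]
          exact pow_le_pow_right₀ (by norm_num) hnat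
      have hu : (0:ℝ) < B + A := by positivity
      have hkey : (B + A) * (R / A + R / B) ≤ R * (2 + (2:ℝ) ^ (C + 1)) := by
        have he : (B + A) * (R / A + R / B) = R * (2 + B / A + A / B) := by
          field_simp
          ring
        rw [he]
        have h2C : B / A + A / B ≤ (2:ℝ) ^ (C + 1) := by
          rw [pow_succ]
          nlinarith [hBA, hAB]
        nlinarith [hR.le, h2C]
      have hprod : (B + A) * (R / A + R / B) < (B + A) * ‖y k - z k‖ := by
        have h1 : M - C ≤ (B + A) * ‖y k - z k‖ := by
          have := le_abs_self ((ℓ k : ℝ) - j k)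
          have habs : |(ℓ k : ℝ) - j k| ≤ C := hsmall.le
          linarith [hk]
        have h2 : R * (2 + (2:ℝ) ^ (C + 1)) + 1 ≤ (B + A) * ‖y k - z k‖ := by
          rw [hMdef] at h1; linarith
        linarith [hkey]
      have hyz : R / A + R / B < ‖y k - z k‖ := lt_of_mul_lt_mul_left hprod hu.le
      have hzero : I k = 0 := by
        simp only [hI]
        have : ∀ x : EuclideanSpace ℝ (Fin N),
            (⟪gradient (fun x => (2:ℝ) ^ ((j k : ℝ) * (((N:ℝ) - 2) / 2)) *
                v ((2:ℝ) ^ (j k) • (x - y k))) x,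
              gradient (fun x => (2:ℝ) ^ ((ℓ k : ℝ) * (((N:ℝ) - 2) / 2)) *
                w ((2:ℝ) ^ (ℓ k) • (x - z k))) x⟫
            + ((2:ℝ) ^ ((j k : ℝ) * (((N:ℝ) - 2) / 2)) * v ((2:ℝ) ^ (j k) • (x - y k))) *
              ((2:ℝ) ^ ((ℓ k : ℝ) * (((N:ℝ) - 2) / 2)) * w ((2:ℝ) ^ (ℓ k) • (x - z k)))) = 0 :=
          fun x => aux_zero hv hw hvs hws _ _ (j k) (ℓ k) (y k) (z k) hyz x
        have h0 : (fun x : EuclideanSpace ℝ (Fin N) =>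
            (⟪gradient (fun x => (2:ℝ) ^ ((j k : ℝ) * (((N:ℝ) - 2) / 2)) *
                v ((2:ℝ) ^ (j k) • (x - y k))) x,
              gradient (fun x => (2:ℝ) ^ ((ℓ k : ℝ) * (((N:ℝ) - 2) / 2)) *
                w ((2:ℝ) ^ (ℓ k) • (x - z k))) x⟫
            + ((2:ℝ) ^ ((j k : ℝ) * (((N:ℝ) - 2) / 2)) * v ((2:ℝ) ^ (j k) • (x - y k))) *
              ((2:ℝ) ^ ((ℓ k : ℝ) * (((N:ℝ) - 2) / 2)) * w ((2:ℝ) ^ (ℓ k) • (x - z k)))))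
            = fun _ => (0:ℝ) := funext this
        rw [h0, integral_zero]
      rw [hzero]
      simpa using hε
    · -- separated scales
      rcases le_total (j k) (ℓ k) with hc | hc
      · have hb := hK1 (j k) (ℓ k) hc (y k) (z k)
        have habs : |(ℓ k : ℝ) - j k| = (ℓ k : ℝ) - j k :=
          abs_of_nonneg (sub_nonneg.2 (by exact_mod_cast hc))
        have hCle : (C:ℝ) ≤ (ℓ k : ℝ) - j k := by rw [habs] at hbig; exact hbig
        have hmono : (2:ℝ) ^ (-(((ℓ k : ℝ) - j k) / 2)) ≤ (2:ℝ) ^ (-((C:ℝ) / 2)) :=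
          Real.rpow_le_rpow_of_exponent_le (by norm_num) (by linarith)
        have : |I k| ≤ K * (2:ℝ) ^ (-((C:ℝ) / 2)) := by
          refine le_trans hb ?_
          exact mul_le_mul (by rw [hKdef]; linarith) hmono (by positivity) hKn
        exact lt_of_le_of_lt this hC
      · have hswap : I k = ∫ x,
            (⟪gradient (fun x => (2:ℝ) ^ ((ℓ k : ℝ) * (((N:ℝ) - 2) / 2)) *
                w ((2:ℝ) ^ (ℓ k) • (x - z k))) x,
              gradient (fun x => (2:ℝ) ^ ((j k : ℝ) * (((N:ℝ) - 2) / 2)) *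
                v ((2:ℝ) ^ (j k) • (x - y k))) x⟫
            + ((2:ℝ) ^ ((ℓ k : ℝ) * (((N:ℝ) - 2) / 2)) * w ((2:ℝ) ^ (ℓ k) • (x - z k))) *
              ((2:ℝ) ^ ((j k : ℝ) * (((N:ℝ) - 2) / 2)) * v ((2:ℝ) ^ (j k) • (x - y k)))) := by
          simp only [hI]
          congr 1
          funext x
          rw [real_inner_comm]
          ring
        have hb := hK2 (ℓ k) (j k) hc (z k) (y k)
        rw [← hswap] at hb
        have habs : |(ℓ k : ℝ) - j k| = (j k : ℝ) - ℓ k := by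
          rw [abs_sub_comm]
          exact abs_of_nonneg (sub_nonneg.2 (by exact_mod_cast hc))
        have hCle : (C:ℝ) ≤ (j k : ℝ) - ℓ k := by rw [habs] at hbig; exact hbig
        have hmono : (2:ℝ) ^ (-(((j k : ℝ) - ℓ k) / 2)) ≤ (2:ℝ) ^ (-((C:ℝ) / 2)) :=
          Real.rpow_le_rpow_of_exponent_le (by norm_num) (by linarith)
        have : |I k| ≤ K * (2:ℝ) ^ (-((C:ℝ) / 2)) := by
          refine le_trans hb ?_
          exact mul_le_mul (by rw [hKdef]; linarith) hmono (by positivity) hKn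
        exact lt_of_le_of_lt this hC
  -- transfer back to the cutoff bubbles
  refine hmain.congr' ?_
  filter_upwards [hVev, hWev] with k hVk hWk
  simp only [hI]
  rw [hVk, hWk]
end
end

section
/- Let N ≥ 3, let m ∈ ℤ, let (j_k), (ℓ_k) be sequences in ℕ with j_k → ∞ and j_k − ℓ_k = m for all k, and let (y_k), (z_k) be sequences in ℝ^N with 2^{j_k}(z_k − y_k) → η₀ ∈ ℝ^N. Then for every v, w ∈ C_c^∞(ℝ^N), the bubbles V_k(x) = 2^{j_k(N−2)/2} χ(x − y_k) v(2^{j_k}(x − y_k)) and W_k(x) = 2^{ℓ_k(N−2)/2} χ(x − z_k) w(2^{ℓ_k}(x − z_k)) satisfy ∫_{ℝ^N}(∇V_k·∇W_k + V_k W_k) dx → 2^{Nm/2} ∫_{ℝ^N} ∇w(η) · ∇v(η₀ + 2^m η) dη as k → ∞. -/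
open MeasureTheory Filter Topology
open scoped RealInnerProductSpace

noncomputable section

theorem ss6_two_rpow (x y : ℝ) : (2:ℝ)^x * (2:ℝ)^y = (2:ℝ)^(x+y) :=
  (Real.rpow_add two_pos x y).symm

theorem ss6_two_rpow_inv (x : ℝ) : ((2:ℝ)^x)⁻¹ = (2:ℝ)^(-x) :=
  (Real.rpow_neg two_pos.le x).symm

theorem ss6_two_rpow_pow (x : ℝ) (n : ℕ) : ((2:ℝ)^x)^n = (2:ℝ)^(x*(n:ℝ)) := by
  rw [← Real.rpow_natCast ((2:ℝ)^x) n, ← Real.rpow_mul two_pos.le]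

section HelperGrad
variable {E : Type*} [NormedAddCommGroup E] [InnerProductSpace ℝ E] [CompleteSpace E]

theorem ss6_gradient_continuous (f : E → ℝ) (hf : ContDiff ℝ (⊤ : ℕ∞) f) : Continuous (gradient f) := by
  have : Continuous (fderiv ℝ f) := hf.continuous_fderiv (by simp)
  exact (InnerProductSpace.toDual ℝ E).symm.continuous.comp this

theorem ss6_gradient_support (f : E → ℝ) :
    ∀ x, x ∉ tsupport f → gradient f x = 0 := by
  intro x hx
  have h0 : fderiv ℝ f x = 0 := by
    by_contra h
    exact hx (support_fderiv_subset ℝ (Function.mem_support.2 h))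
  simp [gradient, h0]

theorem ss6_gradient_hcs (f : E → ℝ) (hf : HasCompactSupport f) :
    HasCompactSupport (gradient f) := by
  apply hf.mono'
  intro x hx
  by_contra hxt
  exact hx (ss6_gradient_support f x hxt)

theorem ss6_gradAux (f g : E → ℝ) (hf : ContDiff ℝ (⊤ : ℕ∞) f) (hg : ContDiff ℝ (⊤ : ℕ∞) g)
    (a c : ℝ) (y : E) (x : E) :
    gradient (fun x => a * g (x - y) * f (c • (x - y))) x
      = (a * f (c • (x - y))) • gradient g (x - y)
        + (a * c * g (x - y)) • gradient f (c • (x - y)) := by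
  have hsub : HasFDerivAt (fun x : E => x - y) (ContinuousLinearMap.id ℝ E) x :=
    (hasFDerivAt_id x).sub_const y
  have hG : HasFDerivAt (fun x : E => g (x - y)) (fderiv ℝ g (x - y)) x := by
    exact ((hg.differentiable (by simp) (x - y)).hasFDerivAt.comp x hsub)
  have hsm : HasFDerivAt (fun x : E => c • (x - y)) (c • ContinuousLinearMap.id ℝ E) x :=
    hsub.const_smul c
  have hF : HasFDerivAt (fun x : E => f (c • (x - y))) (c • fderiv ℝ f (c • (x - y))) x := by
    have h1 := (hf.differentiable (by simp) (c • (x - y))).hasFDerivAt.comp x hsm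
    exact h1.congr_fderiv (by ext u; simp [(fderiv ℝ f (c • (x - y))).map_smul])
  have hconst : HasFDerivAt (fun x : E => a * g (x - y)) (a • fderiv ℝ g (x - y)) x :=
    hG.const_mul a
  have hmul := hconst.mul hF
  have hd : fderiv ℝ (fun x => a * g (x - y) * f (c • (x - y))) x = _ := hmul.fderiv
  simp only [gradient, hd, map_add, LinearIsometryEquiv.map_smul, smul_smul]
  simp only [LinearIsometryEquiv.map_smulₛₗ, starRingEnd_apply, star_trivial]
  module

end HelperGrad

theorem ss6_cov (n : ℕ) (Φ : EuclideanSpace ℝ (Fin n) → ℝ)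
    (z : EuclideanSpace ℝ (Fin n)) {d : ℝ} (hd : 0 < d) :
    ∫ x, Φ x = ((d ^ n)⁻¹) * ∫ η, Φ (z + d⁻¹ • η) := by
  have h1 : ∫ η, (fun x => Φ (z + x)) (d⁻¹ • η)
      = d ^ (Module.finrank ℝ (EuclideanSpace ℝ (Fin n))) • ∫ x, Φ (z + x) :=
    Measure.integral_comp_inv_smul_of_nonneg volume (fun x => Φ (z + x)) hd.le
  rw [integral_add_left_eq_self, finrank_euclideanSpace_fin, smul_eq_mul] at h1
  rw [h1, ← mul_assoc, inv_mul_cancel₀ (pow_ne_zero _ hd.ne'), one_mul]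

theorem ss6_bnd {C C1 a b cc M : ℝ} (hC : |C| ≤ C1) (h1 : |a| ≤ M) (h2 : |b| ≤ M)
    (h3 : |cc| ≤ M * M) (hM : 1 ≤ M) : |C * (a * b * cc)| ≤ C1 * (M * M * (M * M)) := by
  have h0M : (0:ℝ) ≤ M := le_trans zero_le_one hM
  have h0C : (0:ℝ) ≤ C1 := le_trans (abs_nonneg _) hC
  rw [abs_mul, abs_mul, abs_mul]
  have hab : |a| * |b| ≤ M * M := mul_le_mul h1 h2 (abs_nonneg _) h0M
  have habc : |a| * |b| * |cc| ≤ M * M * (M * M) :=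
    mul_le_mul hab h3 (abs_nonneg _) (by positivity)
  exact mul_le_mul hC habc (by positivity) h0C


theorem ss6_abs5 {a b c d e K : ℝ} (ha : |a| ≤ K) (hb : |b| ≤ K) (hc : |c| ≤ K)
    (hd : |d| ≤ K) (he : |e| ≤ K) : |a + b + c + d + e| ≤ 5 * K := by
  have h1 := abs_add_le (a + b + c + d) e
  have h2 := abs_add_le (a + b + c) d
  have h3 := abs_add_le (a + b) c
  have h4 := abs_add_le a b
  linarith

set_option maxHeartbeats 2000000 in
/-- the limit formula from the necessity part of Lemma 3.2 in ℝ^N: for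
comparable scales and converging relative centers, the H¹ inner product of the two bubbles
converges to an explicit cross term. -/
theorem struwe_solimini_stmt6 (N : ℕ) (hN : 3 ≤ N) (r : ℝ) (hr : 0 < r)
    (χ : EuclideanSpace ℝ (Fin N) → ℝ) (hχsm : ContDiff ℝ (⊤ : ℕ∞) χ) (hχc : HasCompactSupport χ)
    (hχ01 : ∀ x, 0 ≤ χ x ∧ χ x ≤ 1)
    (hχ1 : ∀ x : EuclideanSpace ℝ (Fin N), ‖x‖ ≤ r / 2 → χ x = 1)
    (hχ0 : ∀ x : EuclideanSpace ℝ (Fin N), r ≤ ‖x‖ → χ x = 0)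
    (m : ℤ) (j ℓ : ℕ → ℕ) (hj : Tendsto j atTop atTop)
    (hm : ∀ k, (j k : ℤ) - (ℓ k : ℤ) = m)
    (y z : ℕ → EuclideanSpace ℝ (Fin N)) (η₀ : EuclideanSpace ℝ (Fin N))
    (hη : Tendsto (fun k => (2 : ℝ) ^ (j k) • (z k - y k)) atTop (𝓝 η₀))
    (v w : EuclideanSpace ℝ (Fin N) → ℝ)
    (hv : ContDiff ℝ (⊤ : ℕ∞) v) (hvc : HasCompactSupport v)
    (hw : ContDiff ℝ (⊤ : ℕ∞) w) (hwc : HasCompactSupport w)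
    (V W : ℕ → EuclideanSpace ℝ (Fin N) → ℝ)
    (hV : ∀ k x, V k x = (2 : ℝ) ^ ((j k : ℝ) * (((N : ℝ) - 2) / 2)) * χ (x - y k) *
        v ((2 : ℝ) ^ (j k) • (x - y k)))
    (hW : ∀ k x, W k x = (2 : ℝ) ^ ((ℓ k : ℝ) * (((N : ℝ) - 2) / 2)) * χ (x - z k) *
        w ((2 : ℝ) ^ (ℓ k) • (x - z k))) :
    Tendsto (fun k => ∫ x, (⟪gradient (V k) x, gradient (W k) x⟫ + V k x * W k x))
      atTop (𝓝 ((2 : ℝ) ^ ((N : ℝ) * (m : ℝ) / 2) *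
        ∫ η, ⟪gradient w η, gradient v (η₀ + (2 : ℝ) ^ m • η)⟫)) := by
  have h2 : (0:ℝ) < 2 := two_pos
  have hjl : ∀ k, (j k : ℝ) = (ℓ k : ℝ) + (m : ℝ) := by
    intro k
    have h' : ((j k : ℤ) : ℝ) - ((ℓ k : ℤ) : ℝ) = ((m : ℤ) : ℝ) := by
      exact_mod_cast congrArg (Int.cast : ℤ → ℝ) (hm k)
    push_cast at h'
    linarith
  have hcpos : ∀ k, (0:ℝ) < (2:ℝ) ^ (j k) := fun k => by positivity
  have hdpos : ∀ k, (0:ℝ) < (2:ℝ) ^ (ℓ k) := fun k => by positivity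
  -- npow to rpow
  have hcr : ∀ k, ((2:ℝ) ^ (j k) : ℝ) = (2:ℝ) ^ ((j k : ℝ)) := fun k =>
    (Real.rpow_natCast 2 (j k)).symm
  have hdr : ∀ k, ((2:ℝ) ^ (ℓ k) : ℝ) = (2:ℝ) ^ ((ℓ k : ℝ)) := fun k =>
    (Real.rpow_natCast 2 (ℓ k)).symm
  have hmr : ((2:ℝ) ^ m : ℝ) = (2:ℝ) ^ ((m : ℝ)) := (Real.rpow_intCast 2 m).symm
  -- the rescaled integrand
  set h : ℕ → EuclideanSpace ℝ (Fin N) → ℝ := fun k η =>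
      (2:ℝ) ^ ((N:ℝ) * (m:ℝ) / 2 - (j k : ℝ) - (ℓ k : ℝ)) *
        (v ((2:ℝ) ^ (j k) • (z k - y k) + (2:ℝ) ^ ((m:ℝ)) • η) * w η *
          ⟪gradient χ (z k - y k + ((2:ℝ) ^ (ℓ k))⁻¹ • η),
            gradient χ (((2:ℝ) ^ (ℓ k))⁻¹ • η)⟫)
      + (2:ℝ) ^ ((N:ℝ) * (m:ℝ) / 2 - (j k : ℝ)) *
        (v ((2:ℝ) ^ (j k) • (z k - y k) + (2:ℝ) ^ ((m:ℝ)) • η) * χ (((2:ℝ) ^ (ℓ k))⁻¹ • η) *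
          ⟪gradient χ (z k - y k + ((2:ℝ) ^ (ℓ k))⁻¹ • η), gradient w η⟫)
      + (2:ℝ) ^ ((N:ℝ) * (m:ℝ) / 2 - (ℓ k : ℝ)) *
        (w η * χ (z k - y k + ((2:ℝ) ^ (ℓ k))⁻¹ • η) *
          ⟪gradient v ((2:ℝ) ^ (j k) • (z k - y k) + (2:ℝ) ^ ((m:ℝ)) • η),
            gradient χ (((2:ℝ) ^ (ℓ k))⁻¹ • η)⟫)
      + (2:ℝ) ^ ((N:ℝ) * (m:ℝ) / 2) *
        (χ (z k - y k + ((2:ℝ) ^ (ℓ k))⁻¹ • η) * χ (((2:ℝ) ^ (ℓ k))⁻¹ • η) *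
          ⟪gradient v ((2:ℝ) ^ (j k) • (z k - y k) + (2:ℝ) ^ ((m:ℝ)) • η), gradient w η⟫)
      + (2:ℝ) ^ ((N:ℝ) * (m:ℝ) / 2 - (j k : ℝ) - (ℓ k : ℝ)) *
        (χ (z k - y k + ((2:ℝ) ^ (ℓ k))⁻¹ • η) *
          v ((2:ℝ) ^ (j k) • (z k - y k) + (2:ℝ) ^ ((m:ℝ)) • η) *
          (χ (((2:ℝ) ^ (ℓ k))⁻¹ • η) * w η)) with hhdef
  -- limit function
  set L : EuclideanSpace ℝ (Fin N) → ℝ := fun η =>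
      (2:ℝ) ^ ((N:ℝ) * (m:ℝ) / 2) *
        ⟪gradient v (η₀ + (2:ℝ) ^ ((m:ℝ)) • η), gradient w η⟫ with hLdef
  -- step 1: each integral equals ∫ h k
  have key : ∀ k, (∫ x, (⟪gradient (V k) x, gradient (W k) x⟫ + V k x * W k x))
      = ∫ η, h k η := by
    intro k
    have hVk : V k = fun x => (2:ℝ) ^ ((j k : ℝ) * (((N:ℝ) - 2) / 2)) * χ (x - y k) *
        v ((2:ℝ) ^ (j k) • (x - y k)) := funext (hV k)
    have hWk : W k = fun x => (2:ℝ) ^ ((ℓ k : ℝ) * (((N:ℝ) - 2) / 2)) * χ (x - z k) *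
        w ((2:ℝ) ^ (ℓ k) • (x - z k)) := funext (hW k)
    rw [hVk, hWk]
    simp only [ss6_gradAux v χ hv hχsm ((2:ℝ) ^ ((j k : ℝ) * (((N:ℝ) - 2) / 2)))
        ((2:ℝ) ^ (j k)) (y k),
      ss6_gradAux w χ hw hχsm ((2:ℝ) ^ ((ℓ k : ℝ) * (((N:ℝ) - 2) / 2)))
        ((2:ℝ) ^ (ℓ k)) (z k)]
    rw [ss6_cov N _ (z k) (hdpos k), ← MeasureTheory.integral_const_mul]
    refine congrArg (integral volume) (funext fun η => ?_)
    have e1 : z k + ((2:ℝ) ^ (ℓ k))⁻¹ • η - z k = ((2:ℝ) ^ (ℓ k))⁻¹ • η :=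
      add_sub_cancel_left _ _
    have e2 : z k + ((2:ℝ) ^ (ℓ k))⁻¹ • η - y k = z k - y k + ((2:ℝ) ^ (ℓ k))⁻¹ • η :=
      add_sub_right_comm _ _ _
    have e3 : (2:ℝ) ^ (ℓ k) • (((2:ℝ) ^ (ℓ k))⁻¹ • η) = η := smul_inv_smul₀ (hdpos k).ne' η
    have hcd : (2:ℝ) ^ (j k) * ((2:ℝ) ^ (ℓ k))⁻¹ = (2:ℝ) ^ ((m:ℝ)) := by
      rw [hcr, hdr, ss6_two_rpow_inv, ss6_two_rpow]
      congr 1; rw [hjl k]; ring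
    have e4 : (2:ℝ) ^ (j k) • (z k - y k + ((2:ℝ) ^ (ℓ k))⁻¹ • η)
        = (2:ℝ) ^ (j k) • (z k - y k) + (2:ℝ) ^ ((m:ℝ)) • η := by
      rw [smul_add, smul_smul, hcd]
    have hC1 : (((2:ℝ) ^ (ℓ k)) ^ N)⁻¹ * ((2:ℝ) ^ ((j k : ℝ) * (((N:ℝ) - 2) / 2)) *
        (2:ℝ) ^ ((ℓ k : ℝ) * (((N:ℝ) - 2) / 2)) * ((2:ℝ) ^ (j k) * (2:ℝ) ^ (ℓ k)))
        = (2:ℝ) ^ ((N:ℝ) * (m:ℝ) / 2) := by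
      rw [hcr, hdr, ss6_two_rpow_pow, ss6_two_rpow_inv, ss6_two_rpow, ss6_two_rpow,
        ss6_two_rpow, ss6_two_rpow]
      congr 1; rw [hjl k]; ring
    have hC2 : (((2:ℝ) ^ (ℓ k)) ^ N)⁻¹ * ((2:ℝ) ^ ((j k : ℝ) * (((N:ℝ) - 2) / 2)) *
        (2:ℝ) ^ ((ℓ k : ℝ) * (((N:ℝ) - 2) / 2)))
        = (2:ℝ) ^ ((N:ℝ) * (m:ℝ) / 2 - (j k : ℝ) - (ℓ k : ℝ)) := by
      rw [hdr, ss6_two_rpow_pow, ss6_two_rpow_inv, ss6_two_rpow, ss6_two_rpow]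
      congr 1; rw [hjl k]; ring
    have hC3 : (((2:ℝ) ^ (ℓ k)) ^ N)⁻¹ * ((2:ℝ) ^ ((j k : ℝ) * (((N:ℝ) - 2) / 2)) *
        (2:ℝ) ^ ((ℓ k : ℝ) * (((N:ℝ) - 2) / 2)) * (2:ℝ) ^ (ℓ k))
        = (2:ℝ) ^ ((N:ℝ) * (m:ℝ) / 2 - (j k : ℝ)) := by
      rw [hdr, ss6_two_rpow_pow, ss6_two_rpow_inv, ss6_two_rpow, ss6_two_rpow,
        ss6_two_rpow]
      congr 1; rw [hjl k]; ring
    have hC4 : (((2:ℝ) ^ (ℓ k)) ^ N)⁻¹ * ((2:ℝ) ^ ((j k : ℝ) * (((N:ℝ) - 2) / 2)) *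
        (2:ℝ) ^ ((ℓ k : ℝ) * (((N:ℝ) - 2) / 2)) * (2:ℝ) ^ (j k))
        = (2:ℝ) ^ ((N:ℝ) * (m:ℝ) / 2 - (ℓ k : ℝ)) := by
      rw [hcr, hdr, ss6_two_rpow_pow, ss6_two_rpow_inv, ss6_two_rpow, ss6_two_rpow,
        ss6_two_rpow]
      congr 1; rw [hjl k]; ring
    simp only [hhdef, e1, e2, e3, e4]
    simp only [inner_add_left, inner_add_right, real_inner_smul_left, real_inner_smul_right]
    linear_combination (norm := (ring_nf; try rw [ss6_two_rpow,
        show (-(((ℓ k):ℝ) * (N:ℝ)) + (((ℓ k):ℝ) * (N:ℝ) + (N:ℝ) * (m:ℝ) * (1/2)))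
          = (N:ℝ) * (m:ℝ) * (1/2) from by ring]))
      ((v ((2:ℝ) ^ (j k) • (z k - y k) + (2:ℝ) ^ ((m:ℝ)) • η) * w η *
          ⟪gradient χ (z k - y k + ((2:ℝ) ^ (ℓ k))⁻¹ • η),
            gradient χ (((2:ℝ) ^ (ℓ k))⁻¹ • η)⟫)
        + (χ (z k - y k + ((2:ℝ) ^ (ℓ k))⁻¹ • η) *
            v ((2:ℝ) ^ (j k) • (z k - y k) + (2:ℝ) ^ ((m:ℝ)) • η) *
            (χ (((2:ℝ) ^ (ℓ k))⁻¹ • η) * w η))) * hC2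
      + (v ((2:ℝ) ^ (j k) • (z k - y k) + (2:ℝ) ^ ((m:ℝ)) • η) * χ (((2:ℝ) ^ (ℓ k))⁻¹ • η) *
          ⟪gradient χ (z k - y k + ((2:ℝ) ^ (ℓ k))⁻¹ • η), gradient w η⟫) * hC3
      + (w η * χ (z k - y k + ((2:ℝ) ^ (ℓ k))⁻¹ • η) *
          ⟪gradient v ((2:ℝ) ^ (j k) • (z k - y k) + (2:ℝ) ^ ((m:ℝ)) • η),
            gradient χ (((2:ℝ) ^ (ℓ k))⁻¹ • η)⟫) * hC4
      + (χ (z k - y k + ((2:ℝ) ^ (ℓ k))⁻¹ • η) * χ (((2:ℝ) ^ (ℓ k))⁻¹ • η) *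
          ⟪gradient v ((2:ℝ) ^ (j k) • (z k - y k) + (2:ℝ) ^ ((m:ℝ)) • η),
            gradient w η⟫) * hC1
  -- step 2: dominated convergence
  have hDCT : Tendsto (fun k => ∫ η, h k η) atTop (𝓝 (∫ η, L η)) := by
    have hχcont := hχsm.continuous
    have hvcont := hv.continuous
    have hwcont := hw.continuous
    have hGχ : Continuous (gradient χ) := ss6_gradient_continuous χ hχsm
    have hGv : Continuous (gradient v) := ss6_gradient_continuous v hv
    have hGw : Continuous (gradient w) := ss6_gradient_continuous w hw
    -- uniform bounds
    obtain ⟨xv, hxv⟩ := hvcont.norm.exists_forall_ge_of_hasCompactSupport hvc.norm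
    obtain ⟨xw, hxw⟩ := hwcont.norm.exists_forall_ge_of_hasCompactSupport hwc.norm
    obtain ⟨xgv, hxgv⟩ := hGv.norm.exists_forall_ge_of_hasCompactSupport
      (ss6_gradient_hcs v hvc).norm
    obtain ⟨xgw, hxgw⟩ := hGw.norm.exists_forall_ge_of_hasCompactSupport
      (ss6_gradient_hcs w hwc).norm
    obtain ⟨xgχ, hxgχ⟩ := hGχ.norm.exists_forall_ge_of_hasCompactSupport
      (ss6_gradient_hcs χ hχc).norm
    set M : ℝ := 1 + ‖v xv‖ + ‖w xw‖ + ‖gradient v xgv‖ + ‖gradient w xgw‖ +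
      ‖gradient χ xgχ‖ with hMdef
    have hM1 : 1 ≤ M := by
      have := norm_nonneg (v xv); have := norm_nonneg (w xw)
      have := norm_nonneg (gradient v xgv); have := norm_nonneg (gradient w xgw)
      have := norm_nonneg (gradient χ xgχ); simp only [hMdef]; linarith
    have hM0 : 0 ≤ M := le_trans zero_le_one hM1
    have hbv : ∀ t, |v t| ≤ M := by
      intro t
      have h1 : ‖v t‖ ≤ ‖v xv‖ := hxv t
      have := norm_nonneg (w xw); have := norm_nonneg (gradient v xgv)
      have := norm_nonneg (gradient w xgw); have := norm_nonneg (gradient χ xgχ)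
      rw [← Real.norm_eq_abs]; simp only [hMdef]; linarith
    have hbw : ∀ t, |w t| ≤ M := by
      intro t
      have h1 : ‖w t‖ ≤ ‖w xw‖ := hxw t
      have := norm_nonneg (v xv); have := norm_nonneg (gradient v xgv)
      have := norm_nonneg (gradient w xgw); have := norm_nonneg (gradient χ xgχ)
      rw [← Real.norm_eq_abs]; simp only [hMdef]; linarith
    have hbχ : ∀ t, |χ t| ≤ M := by
      intro t
      have h1 := (hχ01 t).1; have h2 := (hχ01 t).2
      rw [abs_of_nonneg h1]; linarith
    have hbgv : ∀ t, ‖gradient v t‖ ≤ M := by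
      intro t
      have h1 : ‖gradient v t‖ ≤ ‖gradient v xgv‖ := hxgv t
      have := norm_nonneg (v xv); have := norm_nonneg (w xw)
      have := norm_nonneg (gradient w xgw); have := norm_nonneg (gradient χ xgχ)
      simp only [hMdef]; linarith
    have hbgw : ∀ t, ‖gradient w t‖ ≤ M := by
      intro t
      have h1 : ‖gradient w t‖ ≤ ‖gradient w xgw‖ := hxgw t
      have := norm_nonneg (v xv); have := norm_nonneg (w xw)
      have := norm_nonneg (gradient v xgv); have := norm_nonneg (gradient χ xgχ)
      simp only [hMdef]; linarith
    have hbgχ : ∀ t, ‖gradient χ t‖ ≤ M := by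
      intro t
      have h1 : ‖gradient χ t‖ ≤ ‖gradient χ xgχ‖ := hxgχ t
      have := norm_nonneg (v xv); have := norm_nonneg (w xw)
      have := norm_nonneg (gradient v xgv); have := norm_nonneg (gradient w xgw)
      simp only [hMdef]; linarith
    have hinner2 : ∀ (a b : EuclideanSpace ℝ (Fin N)), ‖a‖ ≤ M → ‖b‖ ≤ M →
        |⟪a, b⟫| ≤ M * M := fun a b ha hb =>
      (abs_real_inner_le_norm a b).trans (mul_le_mul ha hb (norm_nonneg _) hM0)
    set Cb : ℝ := (2:ℝ) ^ ((N:ℝ) * (m:ℝ) / 2) with hCbdef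
    have hCb0 : 0 < Cb := Real.rpow_pos_of_pos two_pos _
    have hCoef : ∀ (s : ℝ), s ≤ (N:ℝ) * (m:ℝ) / 2 → |(2:ℝ) ^ s| ≤ Cb := by
      intro s hs
      rw [abs_of_pos (Real.rpow_pos_of_pos two_pos _), hCbdef]
      exact Real.rpow_le_rpow_of_exponent_le one_le_two hs
    -- the dominating function
    set bound : EuclideanSpace ℝ (Fin N) → ℝ :=
      (tsupport w).indicator (fun _ => 5 * (Cb * (M * M * (M * M)))) with hbounddef
    have hboundint : Integrable bound := by
      rw [hbounddef, integrable_indicator_iff (isClosed_tsupport w).measurableSet]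
      exact integrableOn_const hwc.measure_lt_top.ne
    -- measurability
    have hcont : ∀ k, Continuous (h k) := by
      intro k
      have cP : Continuous (fun η : EuclideanSpace ℝ (Fin N) =>
          z k - y k + ((2:ℝ) ^ (ℓ k))⁻¹ • η) := continuous_const.add (continuous_const_smul _)
      have cQ : Continuous (fun η : EuclideanSpace ℝ (Fin N) =>
          ((2:ℝ) ^ (ℓ k))⁻¹ • η) := continuous_const_smul _
      have cU : Continuous (fun η : EuclideanSpace ℝ (Fin N) =>
          (2:ℝ) ^ (j k) • (z k - y k) + (2:ℝ) ^ ((m:ℝ)) • η) :=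
        continuous_const.add (continuous_const_smul _)
      simp only [hhdef]
      exact ((((continuous_const.mul (((hvcont.comp cU).mul hwcont).mul
          ((hGχ.comp cP).inner (hGχ.comp cQ)))).add
        (continuous_const.mul (((hvcont.comp cU).mul (hχcont.comp cQ)).mul
          ((hGχ.comp cP).inner hGw)))).add
        (continuous_const.mul ((hwcont.mul (hχcont.comp cP)).mul
          ((hGv.comp cU).inner (hGχ.comp cQ))))).add
        (continuous_const.mul (((hχcont.comp cP).mul (hχcont.comp cQ)).mul
          ((hGv.comp cU).inner hGw)))).add
        (continuous_const.mul (((hχcont.comp cP).mul (hvcont.comp cU)).mul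
          ((hχcont.comp cQ).mul hwcont)))
    -- pointwise bound
    have h_bound : ∀ k, ∀ᵐ η : EuclideanSpace ℝ (Fin N), ‖h k η‖ ≤ bound η := by
      intro k
      refine Filter.Eventually.of_forall fun η => ?_
      by_cases hmem : η ∈ tsupport w
      · rw [hbounddef, Set.indicator_of_mem hmem, Real.norm_eq_abs]
        have hj0 : (0:ℝ) ≤ (j k : ℝ) := Nat.cast_nonneg _
        have hl0 : (0:ℝ) ≤ (ℓ k : ℝ) := Nat.cast_nonneg _
        simp only [hhdef]
        refine ss6_abs5 ?_ ?_ ?_ ?_ ?_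
        · exact ss6_bnd (hCoef _ (by linarith)) (hbv _) (hbw _)
            (hinner2 _ _ (hbgχ _) (hbgχ _)) hM1
        · exact ss6_bnd (hCoef _ (by linarith)) (hbv _) (hbχ _)
            (hinner2 _ _ (hbgχ _) (hbgw _)) hM1
        · exact ss6_bnd (hCoef _ (by linarith)) (hbw _) (hbχ _)
            (hinner2 _ _ (hbgv _) (hbgχ _)) hM1
        · exact ss6_bnd (hCoef _ le_rfl) (hbχ _) (hbχ _)
            (hinner2 _ _ (hbgv _) (hbgw _)) hM1
        · refine ss6_bnd (hCoef _ (by linarith)) (hbχ _) (hbv _) ?_ hM1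
          rw [abs_mul]
          exact mul_le_mul (hbχ _) (hbw _) (abs_nonneg _) hM0
      · rw [hbounddef, Set.indicator_of_notMem hmem]
        have hw0 : w η = 0 := image_eq_zero_of_notMem_tsupport hmem
        have hGw0 : gradient w η = 0 := ss6_gradient_support w η hmem
        simp only [hhdef, hw0, hGw0]
        simp
    -- pointwise limit
    have h_lim : ∀ᵐ η : EuclideanSpace ℝ (Fin N),
        Tendsto (fun k => h k η) atTop (𝓝 (L η)) := by
      refine Filter.Eventually.of_forall fun η => ?_
      have hjr : Tendsto (fun k => (j k : ℝ)) atTop atTop :=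
        tendsto_natCast_atTop_atTop.comp hj
      have hlr : Tendsto (fun k => (ℓ k : ℝ)) atTop atTop := by
        have he : (fun k => (ℓ k : ℝ)) = fun k => (j k : ℝ) + (-(m:ℝ)) :=
          funext fun k => by rw [hjl k]; ring
        rw [he]
        exact tendsto_atTop_add_const_right atTop _ hjr
      have hrpow : ∀ (a : ℕ → ℝ), Tendsto a atTop atTop →
          Tendsto (fun k => (2:ℝ) ^ (a k)) atTop atTop := by
        intro a ha
        have he : (fun k => (2:ℝ) ^ (a k)) = fun k => Real.exp (Real.log 2 * a k) :=
          funext fun k => by rw [Real.rpow_def_of_pos two_pos]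
        rw [he]
        exact Real.tendsto_exp_atTop.comp (ha.const_mul_atTop (Real.log_pos one_lt_two))
      have hct : Tendsto (fun k => ((2:ℝ) ^ (j k) : ℝ)) atTop atTop := by
        simp only [hcr]; exact hrpow _ hjr
      have hdt : Tendsto (fun k => ((2:ℝ) ^ (ℓ k) : ℝ)) atTop atTop := by
        simp only [hdr]; exact hrpow _ hlr
      have hcinv : Tendsto (fun k => (((2:ℝ) ^ (j k) : ℝ))⁻¹) atTop (𝓝 0) :=
        hct.inv_tendsto_atTop
      have hdinv : Tendsto (fun k => (((2:ℝ) ^ (ℓ k) : ℝ))⁻¹) atTop (𝓝 0) :=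
        hdt.inv_tendsto_atTop
      have hzy : Tendsto (fun k => z k - y k) atTop (𝓝 0) := by
        have he : (fun k => z k - y k)
            = fun k => ((2:ℝ) ^ (j k))⁻¹ • ((2:ℝ) ^ (j k) • (z k - y k)) :=
          funext fun k => (inv_smul_smul₀ (hcpos k).ne' _).symm
        rw [he]
        simpa using hcinv.smul hη
      have hQ : Tendsto (fun k => ((2:ℝ) ^ (ℓ k))⁻¹ • η) atTop
          (𝓝 (0 : EuclideanSpace ℝ (Fin N))) := by
        simpa using hdinv.smul_const η
      have hP : Tendsto (fun k => z k - y k + ((2:ℝ) ^ (ℓ k))⁻¹ • η) atTop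
          (𝓝 (0 : EuclideanSpace ℝ (Fin N))) := by
        simpa using hzy.add hQ
      have hU : Tendsto (fun k => (2:ℝ) ^ (j k) • (z k - y k) + (2:ℝ) ^ ((m:ℝ)) • η)
          atTop (𝓝 (η₀ + (2:ℝ) ^ ((m:ℝ)) • η)) := hη.add_const _
      have hχ00 : χ 0 = 1 := hχ1 0 (by rw [norm_zero]; positivity)
      -- coefficients tend to zero
      have hC2z : Tendsto (fun k => (2:ℝ) ^ ((N:ℝ) * (m:ℝ) / 2 - (j k : ℝ) - (ℓ k : ℝ)))
          atTop (𝓝 0) := by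
        have he : (fun k => (2:ℝ) ^ ((N:ℝ) * (m:ℝ) / 2 - (j k : ℝ) - (ℓ k : ℝ)))
            = fun k => (2:ℝ) ^ ((N:ℝ) * (m:ℝ) / 2) * ((2:ℝ) ^ (j k))⁻¹ *
                ((2:ℝ) ^ (ℓ k))⁻¹ := by
          funext k
          rw [hcr, hdr, ss6_two_rpow_inv, ss6_two_rpow_inv, ss6_two_rpow, ss6_two_rpow]
          congr 1 <;> ring
        rw [he]
        simpa using (tendsto_const_nhds.mul hcinv).mul hdinv
      have hC3z : Tendsto (fun k => (2:ℝ) ^ ((N:ℝ) * (m:ℝ) / 2 - (j k : ℝ)))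
          atTop (𝓝 0) := by
        have he : (fun k => (2:ℝ) ^ ((N:ℝ) * (m:ℝ) / 2 - (j k : ℝ)))
            = fun k => (2:ℝ) ^ ((N:ℝ) * (m:ℝ) / 2) * ((2:ℝ) ^ (j k))⁻¹ := by
          funext k
          rw [hcr, ss6_two_rpow_inv, ss6_two_rpow]
          congr 1 <;> ring
        rw [he]
        simpa using tendsto_const_nhds.mul hcinv
      have hC4z : Tendsto (fun k => (2:ℝ) ^ ((N:ℝ) * (m:ℝ) / 2 - (ℓ k : ℝ)))
          atTop (𝓝 0) := by
        have he : (fun k => (2:ℝ) ^ ((N:ℝ) * (m:ℝ) / 2 - (ℓ k : ℝ)))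
            = fun k => (2:ℝ) ^ ((N:ℝ) * (m:ℝ) / 2) * ((2:ℝ) ^ (ℓ k))⁻¹ := by
          funext k
          rw [hdr, ss6_two_rpow_inv, ss6_two_rpow]
          congr 1 <;> ring
        rw [he]
        simpa using tendsto_const_nhds.mul hdinv
      -- factor limits
      have tv : Tendsto (fun k => v ((2:ℝ) ^ (j k) • (z k - y k) + (2:ℝ) ^ ((m:ℝ)) • η))
          atTop (𝓝 (v (η₀ + (2:ℝ) ^ ((m:ℝ)) • η))) := (hvcont.tendsto _).comp hU
      have tχP : Tendsto (fun k => χ (z k - y k + ((2:ℝ) ^ (ℓ k))⁻¹ • η)) atTop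
          (𝓝 (χ 0)) := (hχcont.tendsto _).comp hP
      have tχQ : Tendsto (fun k => χ (((2:ℝ) ^ (ℓ k))⁻¹ • η)) atTop (𝓝 (χ 0)) :=
        (hχcont.tendsto _).comp hQ
      have tGχP : Tendsto (fun k => gradient χ (z k - y k + ((2:ℝ) ^ (ℓ k))⁻¹ • η)) atTop
          (𝓝 (gradient χ 0)) := (hGχ.tendsto _).comp hP
      have tGχQ : Tendsto (fun k => gradient χ (((2:ℝ) ^ (ℓ k))⁻¹ • η)) atTop
          (𝓝 (gradient χ 0)) := (hGχ.tendsto _).comp hQ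
      have tGv : Tendsto (fun k =>
          gradient v ((2:ℝ) ^ (j k) • (z k - y k) + (2:ℝ) ^ ((m:ℝ)) • η)) atTop
          (𝓝 (gradient v (η₀ + (2:ℝ) ^ ((m:ℝ)) • η))) := (hGv.tendsto _).comp hU
      have T1 := hC2z.mul ((tv.mul (tendsto_const_nhds (x := w η))).mul (tGχP.inner tGχQ))
      have T2 := hC3z.mul ((tv.mul tχQ).mul
        (tGχP.inner (tendsto_const_nhds (x := gradient w η))))
      have T3 := hC4z.mul (((tendsto_const_nhds (x := w η)).mul tχP).mul (tGv.inner tGχQ))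
      have T4 := (tendsto_const_nhds (x := (2:ℝ) ^ ((N:ℝ) * (m:ℝ) / 2))).mul
        ((tχP.mul tχQ).mul (tGv.inner (tendsto_const_nhds (x := gradient w η))))
      have T5 := hC2z.mul ((tχP.mul tv).mul (tχQ.mul (tendsto_const_nhds (x := w η))))
      have Tall := (((T1.add T2).add T3).add T4).add T5
      simp only [hhdef, hLdef]
      simpa [hχ00] using Tall
    exact tendsto_integral_of_dominated_convergence bound
      (fun k => (hcont k).aestronglyMeasurable) hboundint h_bound h_lim
  -- step 3: identify the limit
  have hfin : (∫ η, L η) = (2 : ℝ) ^ ((N : ℝ) * (m : ℝ) / 2) *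
      ∫ η, ⟪gradient w η, gradient v (η₀ + (2 : ℝ) ^ m • η)⟫ := by
    simp only [hLdef]
    rw [MeasureTheory.integral_const_mul]
    refine congrArg _ ?_
    refine congrArg (integral volume) (funext fun η => ?_)
    rw [real_inner_comm, hmr]
  rw [← hfin]
  exact hDCT.congr fun k => (key k).symm

end
end
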